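/- arXiv:1604.04443 — 12 statements merged into one kernel-verified Lean document; each statement's English description precedes it below -/
import Mathlib

section
/- Let z : ℝ → V be differentiable at every t ∈ [0,T] with derivative satisfying z'(t) + A z(t) = 0 for all t ∈ [0,T]. Then for every t ∈ [0,T], ‖z(t)‖ ≤ exp(−δ t) · ‖z(0)‖. -/
open RealInnerProductSpace Set

/-!
The energy `‖z t‖²` has derivative `2⟪z t, z' t⟫ = -2⟪A (z t), z t⟫ ≤ -2δ ‖z t‖²`, so by
Grönwall's inequality `‖z t‖² ≤ exp (-2δ t) ‖z 0‖²`; take square roots.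
-/

theorem le_exp_mul_of_hasDerivAt_le_mul {f f' : ℝ → ℝ} {K a b : ℝ}
    (hf : ∀ x ∈ Icc a b, HasDerivAt f (f' x) x) (bound : ∀ x ∈ Icc a b, f' x ≤ K * f x) :
    ∀ x ∈ Icc a b, f x ≤ Real.exp (K * (x - a)) * f a := by
  intro x hx
  have hgronwall := le_gronwallBound_of_liminf_deriv_right_le (f' := f') (ε := 0)
    (fun y hy ↦ (hf y hy).continuousAt.continuousWithinAt)
    (fun y hy _ ↦ (hf y (Ico_subset_Icc_self hy)).hasDerivWithinAt.liminf_right_slope_le)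
    le_rfl (fun y hy ↦ by simpa using bound y (Ico_subset_Icc_self hy)) x hx
  rwa [gronwallBound_ε0, mul_comm] at hgronwall

theorem norm_le_exp_mul_of_hasDerivAt_eq_neg_apply
    {V : Type*} [NormedAddCommGroup V] [InnerProductSpace ℝ V] {A : V →L[ℝ] V} {δ a b : ℝ}
    (hcoer : ∀ v : V, δ * ‖v‖ ^ 2 ≤ ⟪A v, v⟫) {z : ℝ → V}
    (hz : ∀ t ∈ Icc a b, HasDerivAt z (-A (z t)) t) :
    ∀ t ∈ Icc a b, ‖z t‖ ≤ Real.exp (-δ * (t - a)) * ‖z a‖ := by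
  intro t ht
  have henergy : ∀ s ∈ Icc a b, HasDerivAt (‖z ·‖ ^ 2) (-2 * ⟪A (z s), z s⟫) s := by
    intro s hs
    convert (hz s hs).norm_sq using 1
    rw [inner_neg_right, real_inner_comm]
    ring
  have hdecay : ∀ s ∈ Icc a b, -2 * ⟪A (z s), z s⟫ ≤ -2 * δ * ‖z s‖ ^ 2 :=
    fun s _ ↦ by linarith [hcoer (z s)]
  have hsq := le_exp_mul_of_hasDerivAt_le_mul henergy hdecay t ht
  have hexp : Real.exp (-2 * δ * (t - a)) = Real.exp (-δ * (t - a)) ^ 2 := by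
    rw [← Real.exp_nat_mul]
    ring_nf
  rw [hexp, ← mul_pow] at hsq
  exact le_of_sq_le_sq hsq (by positivity)

theorem stmt_0_general {V : Type*} [NormedAddCommGroup V] [InnerProductSpace ℝ V]
    (A : V →L[ℝ] V)
    (δ : ℝ) (hcoer : ∀ v : V, δ * ‖v‖ ^ 2 ≤ ⟪A v, v⟫)
    (T : ℝ)
    (z : ℝ → V)
    (hdiff : ∀ t ∈ Set.Icc (0 : ℝ) T, DifferentiableAt ℝ z t)
    (heq : ∀ t ∈ Set.Icc (0 : ℝ) T, deriv z t + A (z t) = 0) :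
    ∀ t ∈ Set.Icc (0 : ℝ) T, ‖z t‖ ≤ Real.exp (-δ * t) * ‖z 0‖ := by
  have hz : ∀ t ∈ Icc 0 T, HasDerivAt z (-A (z t)) t := fun t ht ↦ by
    simpa [eq_neg_of_add_eq_zero_left (heq t ht)] using (hdiff t ht).hasDerivAt
  simpa using norm_le_exp_mul_of_hasDerivAt_eq_neg_apply hcoer hz

/-- Decay estimate for the homogeneous equation `z' + A z = 0`:
`‖z(t)‖ ≤ exp(-δ t) ‖z(0)‖` on `[0, T]`. -/
theorem stmt_0 {V : Type*} [NormedAddCommGroup V] [InnerProductSpace ℝ V]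
    [FiniteDimensional ℝ V]
    (A : V →L[ℝ] V) (hA : ∀ x y : V, ⟪A x, y⟫ = ⟪x, A y⟫)
    (δ : ℝ) (hδ : 0 < δ) (hcoer : ∀ v : V, δ * ‖v‖ ^ 2 ≤ ⟪A v, v⟫)
    (T : ℝ) (hT : 0 < T)
    (z : ℝ → V)
    (hdiff : ∀ t ∈ Set.Icc (0 : ℝ) T, DifferentiableAt ℝ z t)
    (heq : ∀ t ∈ Set.Icc (0 : ℝ) T, deriv z t + A (z t) = 0) :
    ∀ t ∈ Set.Icc (0 : ℝ) T, ‖z t‖ ≤ Real.exp (-δ * t) * ‖z 0‖ :=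
  stmt_0_general A δ hcoer T z hdiff heq
end

section
/- Let χ ∈ V and let v : ℝ → V be differentiable on [0,T] with v'(t) + A v(t) = 0 for t ∈ [0,T] and v(T) − v(0) = χ. Let (v^k)_{k∈ℕ} be a sequence of functions ℝ → V, each differentiable on [0,T] with (v^k)'(t) + A v^k(t) = 0 for t ∈ [0,T], and satisfying v^{k+1}(0) = v^k(T) − χ for every k. Then for every k ∈ ℕ, ‖v^k(0) − v(0)‖ ≤ exp(−δ T k) · ‖v^0(0) − v(0)‖. -/
/-!
The error `e_k = v^k - v` solves `e' + A e = 0`, and the nonlocal condition for `v` turns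
the update rule into `e_{k+1}(0) = e_k(T)`. By coercivity `t ↦ exp(2δt) ‖e(t)‖²` is
antitone, so one step contracts the error by `exp(-δT)`; iterating gives the geometric bound.
-/

open RealInnerProductSpace Set

section Dissipative

variable {V : Type*} [NormedAddCommGroup V] [InnerProductSpace ℝ V]
  {A : V →L[ℝ] V} {δ : ℝ} {w : ℝ → V} {a b : ℝ}

lemma hasDerivAt_neg_of_deriv_add_eq_zero {u : ℝ → V} {y : V} {t : ℝ}
    (hu : DifferentiableAt ℝ u t) (h : deriv u t + y = 0) : HasDerivAt u (-y) t := by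
  rw [← eq_neg_of_add_eq_zero_left h]
  exact hu.hasDerivAt

lemma antitoneOn_exp_mul_norm_sq (hcoer : ∀ v : V, δ * ‖v‖ ^ 2 ≤ ⟪A v, v⟫)
    (hw : ∀ t ∈ Icc a b, HasDerivAt w (-A (w t)) t) :
    AntitoneOn (fun t => Real.exp (2 * δ * t) * ‖w t‖ ^ 2) (Icc a b) := by
  have hE : ∀ t ∈ Icc a b, HasDerivAt (fun t => Real.exp (2 * δ * t) * ‖w t‖ ^ 2)
      (Real.exp (2 * δ * t) * (2 * (δ * ‖w t‖ ^ 2 - ⟪A (w t), w t⟫))) t := by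
    intro t ht
    have hexp : HasDerivAt (fun t => Real.exp (2 * δ * t))
        (Real.exp (2 * δ * t) * (2 * δ)) t := by
      simpa using ((hasDerivAt_id t).const_mul (2 * δ)).exp
    refine (hexp.mul (hw t ht).norm_sq).congr_deriv ?_
    rw [inner_neg_right, real_inner_comm]
    ring
  refine antitoneOn_of_hasDerivWithinAt_nonpos (convex_Icc a b)
    (fun t ht => (hE t ht).continuousAt.continuousWithinAt)
    (fun t ht => (hE t (interior_subset ht)).hasDerivWithinAt) fun t ht => ?_
  exact mul_nonpos_of_nonneg_of_nonpos (Real.exp_pos _).le (by linarith [hcoer (w t)])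

lemma norm_le_exp_mul_norm_of_hasDerivAt (hcoer : ∀ v : V, δ * ‖v‖ ^ 2 ≤ ⟪A v, v⟫)
    (hab : a ≤ b) (hw : ∀ t ∈ Icc a b, HasDerivAt w (-A (w t)) t) :
    ‖w b‖ ≤ Real.exp (-δ * (b - a)) * ‖w a‖ := by
  have hmono := antitoneOn_exp_mul_norm_sq hcoer hw (left_mem_Icc.2 hab) (right_mem_Icc.2 hab) hab
  have hsq : ‖w b‖ ^ 2 ≤ (Real.exp (-δ * (b - a)) * ‖w a‖) ^ 2 := by
    have hexp : Real.exp (-δ * (b - a)) ^ 2 * Real.exp (2 * δ * b) = Real.exp (2 * δ * a) := by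
      rw [← Real.exp_nat_mul, ← Real.exp_add]
      ring_nf
    rw [mul_pow, ← mul_le_mul_iff_of_pos_left (Real.exp_pos (2 * δ * b))]
    calc _ ≤ Real.exp (2 * δ * a) * ‖w a‖ ^ 2 := hmono
      _ = _ := by rw [← hexp]; ring
  exact (pow_le_pow_iff_left₀ (norm_nonneg _) (by positivity) two_ne_zero).1 hsq

end Dissipative

theorem stmt_2_general {V : Type*} [NormedAddCommGroup V] [InnerProductSpace ℝ V]
    (A : V →L[ℝ] V)
    (δ : ℝ) (hcoer : ∀ v : V, δ * ‖v‖ ^ 2 ≤ ⟪A v, v⟫)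
    (T : ℝ) (hT : 0 < T)
    (χ : V) (v : ℝ → V) (vs : ℕ → ℝ → V)
    (hvdiff : ∀ t ∈ Set.Icc (0 : ℝ) T, DifferentiableAt ℝ v t)
    (hveq : ∀ t ∈ Set.Icc (0 : ℝ) T, deriv v t + A (v t) = 0)
    (hvnl : v T - v 0 = χ)
    (hsdiff : ∀ k : ℕ, ∀ t ∈ Set.Icc (0 : ℝ) T, DifferentiableAt ℝ (vs k) t)
    (hseq : ∀ k : ℕ, ∀ t ∈ Set.Icc (0 : ℝ) T, deriv (vs k) t + A (vs k t) = 0)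
    (hiter : ∀ k : ℕ, vs (k + 1) 0 = vs k T - χ) :
    ∀ k : ℕ, ‖vs k 0 - v 0‖ ≤ Real.exp (-δ * T * k) * ‖vs 0 0 - v 0‖ := by
  have herr_deriv : ∀ k, ∀ t ∈ Icc 0 T,
      HasDerivAt (fun s => vs k s - v s) (-A (vs k t - v t)) t := by
    intro k t ht
    refine ((hasDerivAt_neg_of_deriv_add_eq_zero (hsdiff k t ht) (hseq k t ht)).fun_sub
      (hasDerivAt_neg_of_deriv_add_eq_zero (hvdiff t ht) (hveq t ht))).congr_deriv ?_
    rw [map_sub]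
    abel
  have herr_step : ∀ k, vs (k + 1) 0 - v 0 = vs k T - v T := by
    intro k
    rw [hiter k, ← hvnl]
    abel
  intro k
  have hgeom := le_geom (u := fun k => ‖vs k 0 - v 0‖) (Real.exp_pos (-δ * T)).le k
    fun j _ => by
      simpa [herr_step] using norm_le_exp_mul_norm_of_hasDerivAt hcoer hT.le (herr_deriv j)
  rwa [mul_comm _ (k : ℝ), Real.exp_nat_mul]

/-- The full iterative process `v^{k+1}(0) = v^k(T) - χ` for the nonlocal problem
`v' + A v = 0`, `v(T) - v(0) = χ` converges geometrically:
`‖v^k(0) - v(0)‖ ≤ exp(-δ T k) ‖v^0(0) - v(0)‖`. -/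
theorem stmt_2 {V : Type*} [NormedAddCommGroup V] [InnerProductSpace ℝ V]
    [FiniteDimensional ℝ V]
    (A : V →L[ℝ] V) (hA : ∀ x y : V, ⟪A x, y⟫ = ⟪x, A y⟫)
    (δ : ℝ) (hδ : 0 < δ) (hcoer : ∀ v : V, δ * ‖v‖ ^ 2 ≤ ⟪A v, v⟫)
    (T : ℝ) (hT : 0 < T)
    (χ : V) (v : ℝ → V) (vs : ℕ → ℝ → V)
    (hvdiff : ∀ t ∈ Set.Icc (0 : ℝ) T, DifferentiableAt ℝ v t)
    (hveq : ∀ t ∈ Set.Icc (0 : ℝ) T, deriv v t + A (v t) = 0)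
    (hvnl : v T - v 0 = χ)
    (hsdiff : ∀ k : ℕ, ∀ t ∈ Set.Icc (0 : ℝ) T, DifferentiableAt ℝ (vs k) t)
    (hseq : ∀ k : ℕ, ∀ t ∈ Set.Icc (0 : ℝ) T, deriv (vs k) t + A (vs k t) = 0)
    (hiter : ∀ k : ℕ, vs (k + 1) 0 = vs k T - χ) :
    ∀ k : ℕ, ‖vs k 0 - v 0‖ ≤ Real.exp (-δ * T * k) * ‖vs 0 0 - v 0‖ :=
  stmt_2_general A δ hcoer T hT χ v vs hvdiff hveq hvnl hsdiff hseq hiter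
end

section
/- Let τ > 0 and let z : ℕ → V satisfy the implicit difference scheme (z_{n+1} − z_n)/τ + A z_{n+1} = 0 for all n ∈ ℕ. Then for every n ∈ ℕ, ‖z_n‖ ≤ (1 + τ δ)^{−n} · ‖z_0‖. -/
/-!
Pairing the scheme `z n = z (n+1) + τ A z (n+1)` with `z (n+1)` and using coercivity gives
`(1 + τ δ) ‖z (n+1)‖² ≤ ⟪z n, z (n+1)⟫ ≤ ‖z n‖ ‖z (n+1)‖`, so each step contracts the norm by
the factor `(1 + τ δ)⁻¹`.
-/

open RealInnerProductSpace

theorem eq_add_smul_of_inv_smul_sub_add_eq_zero {V : Type*} [AddCommGroup V] [Module ℝ V]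
    {τ : ℝ} (hτ : τ ≠ 0) {x y w : V} (h : τ⁻¹ • (y - x) + w = 0) : x = y + τ • w := by
  have h' := congrArg (τ • ·) h
  simp only [smul_add, smul_smul, mul_inv_cancel₀ hτ, one_smul, smul_zero] at h'
  rw [sub_add_eq_add_sub, sub_eq_zero] at h'
  exact h'.symm

theorem mul_norm_le_norm_add_smul_of_coercive {V : Type*} [NormedAddCommGroup V]
    [InnerProductSpace ℝ V] {τ δ : ℝ} (hτ : 0 ≤ τ) {y w : V} (hw : δ * ‖y‖ ^ 2 ≤ ⟪w, y⟫) :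
    (1 + τ * δ) * ‖y‖ ≤ ‖y + τ • w‖ := by
  have hinner : (1 + τ * δ) * ‖y‖ ^ 2 ≤ ⟪y + τ • w, y⟫ := by
    rw [inner_add_left, real_inner_smul_left, real_inner_self_eq_norm_sq]
    nlinarith
  have hcs : (1 + τ * δ) * ‖y‖ * ‖y‖ ≤ ‖y + τ • w‖ * ‖y‖ := by
    nlinarith [real_inner_le_norm (y + τ • w) y]
  rcases (norm_nonneg y).eq_or_lt with hy | hy
  · rw [← hy, mul_zero]
    exact norm_nonneg _
  · exact le_of_mul_le_mul_right hcs hy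

theorem le_inv_pow_mul_of_mul_succ_le {u : ℕ → ℝ} {q : ℝ} (hq : 0 < q)
    (h : ∀ n, q * u (n + 1) ≤ u n) (n : ℕ) : u n ≤ (q ^ n)⁻¹ * u 0 := by
  induction n with
  | zero => simp
  | succ n ih =>
    calc u (n + 1) ≤ q⁻¹ * u n := by
          rw [inv_mul_eq_div, le_div_iff₀ hq, mul_comm]
          exact h n
      _ ≤ q⁻¹ * ((q ^ n)⁻¹ * u 0) := by gcongr
      _ = (q ^ (n + 1))⁻¹ * u 0 := by rw [pow_succ, mul_inv]; ring

theorem stmt_4_general {V : Type*} [NormedAddCommGroup V] [InnerProductSpace ℝ V]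
    (A : V →L[ℝ] V)
    (δ : ℝ) (hδ : 0 < δ) (hcoer : ∀ v : V, δ * ‖v‖ ^ 2 ≤ ⟪A v, v⟫)
    (τ : ℝ) (hτ : 0 < τ)
    (z : ℕ → V)
    (hscheme : ∀ n : ℕ, τ⁻¹ • (z (n + 1) - z n) + A (z (n + 1)) = 0) :
    ∀ n : ℕ, ‖z n‖ ≤ ((1 + τ * δ) ^ n)⁻¹ * ‖z 0‖ := by
  refine le_inv_pow_mul_of_mul_succ_le (u := fun n ↦ ‖z n‖) (by positivity) fun n ↦ ?_
  rw [eq_add_smul_of_inv_smul_sub_add_eq_zero hτ.ne' (hscheme n)]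
  exact mul_norm_le_norm_add_smul_of_coercive hτ.le (hcoer _)

/-- A priori estimate for the fully implicit scheme
`(z_{n+1} - z_n)/τ + A z_{n+1} = 0`: `‖z_n‖ ≤ (1 + τ δ)^{-n} ‖z_0‖`. -/
theorem stmt_4 {V : Type*} [NormedAddCommGroup V] [InnerProductSpace ℝ V]
    [FiniteDimensional ℝ V]
    (A : V →L[ℝ] V) (hA : ∀ x y : V, ⟪A x, y⟫ = ⟪x, A y⟫)
    (δ : ℝ) (hδ : 0 < δ) (hcoer : ∀ v : V, δ * ‖v‖ ^ 2 ≤ ⟪A v, v⟫)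
    (τ : ℝ) (hτ : 0 < τ)
    (z : ℕ → V)
    (hscheme : ∀ n : ℕ, τ⁻¹ • (z (n + 1) - z n) + A (z (n + 1)) = 0) :
    ∀ n : ℕ, ‖z n‖ ≤ ((1 + τ * δ) ^ n)⁻¹ * ‖z 0‖ :=
  stmt_4_general A δ hδ hcoer τ hτ z hscheme
end

section
/- (Theorem 1.) Let τ > 0, N ≥ 1 a natural number, χ ∈ V and φ̂ ∈ V. Let v : ℕ → V satisfy (v_{n+1} − v_n)/τ + A v_{n+1} = 0 for 0 ≤ n ≤ N−1 and v_N − v_0 = χ, and set φ = φ̂ + v_0. Let (v^k)_{k∈ℕ} be a sequence of functions ℕ → V such that for every k: (v^k_{n+1} − v^k_n)/τ + A v^k_{n+1} = 0 for 0 ≤ n ≤ N−1, and v^{k+1}_0 = v^k_N − χ; set φ^k = φ̂ + v^k_0. Then for every k ∈ ℕ, ‖v^{k+1}_0 − v_0‖ ≤ (1 + τ δ)^{−N} · ‖v^k_0 − v_0‖ and ‖φ^{k+1} − φ‖ ≤ (1 + τ δ)^{−N} · ‖v^k_0 − v_0‖; in particular the iterative process converges linearly with rate (1 + τ δ)^{−N}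 < 1. -/
/-!
The error `e = v^k - v` solves the same homogeneous implicit scheme, and one step
`e_n = e_{n+1} + τ A e_{n+1}` gives, by coercivity and Cauchy–Schwarz,
`(1 + τδ) ‖e_{n+1}‖² ≤ ⟪e_n, e_{n+1}⟫ ≤ ‖e_n‖ ‖e_{n+1}‖`. Hence `‖e_N‖ ≤ (1 + τδ)^{-N} ‖e_0‖`,
while the nonlocal condition makes `v^{k+1}_0 - v_0 = e_N`.
-/

open RealInnerProductSpace

theorem pow_mul_le_of_forall_mul_le_succ {q : ℝ} (hq : 0 ≤ q) {a : ℕ → ℝ} {N : ℕ}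
    (h : ∀ n < N, q * a (n + 1) ≤ a n) : q ^ N * a N ≤ a 0 := by
  induction N with
  | zero => simp
  | succ N ih =>
    calc q ^ (N + 1) * a (N + 1) = q ^ N * (q * a (N + 1)) := by ring
      _ ≤ q ^ N * a N := mul_le_mul_of_nonneg_left (h N N.lt_succ_self) (pow_nonneg hq N)
      _ ≤ a 0 := ih fun n hn => h n (hn.trans N.lt_succ_self)

section ImplicitEuler

variable {V : Type*} [NormedAddCommGroup V] [InnerProductSpace ℝ V]

def IsImplicitEulerSolution (A : V →ₗ[ℝ] V) (τ : ℝ) (N : ℕ) (v : ℕ → V) : Prop :=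
  ∀ n < N, τ⁻¹ • (v (n + 1) - v n) + A (v (n + 1)) = 0

theorem IsImplicitEulerSolution.sub {A : V →ₗ[ℝ] V} {τ : ℝ} {N : ℕ} {v w : ℕ → V}
    (hv : IsImplicitEulerSolution A τ N v) (hw : IsImplicitEulerSolution A τ N w) :
    IsImplicitEulerSolution A τ N (v - w) := by
  intro n hn
  have h := congrArg₂ (· - ·) (hv n hn) (hw n hn)
  simp only [Pi.sub_apply, map_sub, smul_sub, sub_zero] at h ⊢
  rw [← h]
  abel

theorem eq_add_smul_of_implicit_step {A : V →ₗ[ℝ] V} {τ : ℝ} (hτ : τ ≠ 0) {u w : V}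
    (h : τ⁻¹ • (w - u) + A w = 0) : u = w + τ • A w := by
  have h' := congrArg (τ • ·) h
  simp only [smul_add, smul_smul, mul_inv_cancel₀ hτ, one_smul, smul_zero] at h'
  rw [← sub_eq_zero, ← neg_eq_zero, ← h']
  abel

theorem mul_norm_le_norm_add_smul {A : V →ₗ[ℝ] V} {δ τ : ℝ} (hτ : 0 ≤ τ) {w : V}
    (hcoer : δ * ‖w‖ ^ 2 ≤ ⟪A w, w⟫) : (1 + τ * δ) * ‖w‖ ≤ ‖w + τ • A w‖ := by
  have hlow : (1 + τ * δ) * ‖w‖ ^ 2 ≤ ⟪w + τ • A w, w⟫ := by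
    rw [inner_add_left, real_inner_smul_left, real_inner_self_eq_norm_sq]
    nlinarith
  have hcs := real_inner_le_norm (w + τ • A w) w
  rcases (norm_nonneg w).eq_or_lt with hw | hw
  · rw [← hw, mul_zero]
    exact norm_nonneg _
  · nlinarith

theorem IsImplicitEulerSolution.pow_mul_norm_le {A : V →ₗ[ℝ] V} {δ τ : ℝ} {N : ℕ} {v : ℕ → V}
    (hv : IsImplicitEulerSolution A τ N v) (hτ : 0 < τ) (hδ : 0 ≤ δ)
    (hcoer : ∀ w : V, δ * ‖w‖ ^ 2 ≤ ⟪A w, w⟫) :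
    (1 + τ * δ) ^ N * ‖v N‖ ≤ ‖v 0‖ := by
  refine pow_mul_le_of_forall_mul_le_succ (a := fun n => ‖v n‖) (by positivity) fun n hn => ?_
  rw [eq_add_smul_of_implicit_step hτ.ne' (hv n hn)]
  exact mul_norm_le_norm_add_smul hτ.le (hcoer _)

end ImplicitEuler

theorem stmt_5_general {V : Type*} [NormedAddCommGroup V] [InnerProductSpace ℝ V]
    (A : V →L[ℝ] V)
    (δ : ℝ) (hδ : 0 < δ) (hcoer : ∀ v : V, δ * ‖v‖ ^ 2 ≤ ⟪A v, v⟫)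
    (τ : ℝ) (hτ : 0 < τ) (N : ℕ) (hN : 1 ≤ N)
    (χ φhat : V)
    (v : ℕ → V)
    (hvscheme : ∀ n < N, τ⁻¹ • (v (n + 1) - v n) + A (v (n + 1)) = 0)
    (hvnl : v N - v 0 = χ)
    (φ : V) (hφ : φ = φhat + v 0)
    (vs : ℕ → ℕ → V)
    (hsscheme : ∀ k : ℕ, ∀ n < N, τ⁻¹ • (vs k (n + 1) - vs k n) + A (vs k (n + 1)) = 0)
    (hiter : ∀ k : ℕ, vs (k + 1) 0 = vs k N - χ)
    (φs : ℕ → V) (hφs : ∀ k : ℕ, φs k = φhat + vs k 0) :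
    ((1 + τ * δ) ^ N)⁻¹ < 1 ∧
      (∀ k : ℕ, ‖vs (k + 1) 0 - v 0‖ ≤ ((1 + τ * δ) ^ N)⁻¹ * ‖vs k 0 - v 0‖) ∧
      (∀ k : ℕ, ‖φs (k + 1) - φ‖ ≤ ((1 + τ * δ) ^ N)⁻¹ * ‖vs k 0 - v 0‖) := by
  have hpow : 1 < (1 + τ * δ) ^ N := one_lt_pow₀ (by nlinarith) (by omega)
  have hv0 : ∀ k, ‖vs (k + 1) 0 - v 0‖ ≤ ((1 + τ * δ) ^ N)⁻¹ * ‖vs k 0 - v 0‖ := by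
    intro k
    have herr : IsImplicitEulerSolution A.toLinearMap τ N (vs k - v) :=
      IsImplicitEulerSolution.sub (hsscheme k) hvscheme
    have hend : vs (k + 1) 0 - v 0 = (vs k - v) N := by
      rw [hiter k, ← hvnl, Pi.sub_apply]
      abel
    rw [hend, inv_mul_eq_div, le_div_iff₀ (by positivity), mul_comm]
    exact herr.pow_mul_norm_le hτ hδ.le hcoer
  refine ⟨inv_lt_one_of_one_lt₀ hpow, hv0, fun k => ?_⟩
  rw [hφs, hφ, add_sub_add_left_eq_sub]
  exact hv0 k

/-- Theorem 1: the iterative process for the fully implicit scheme with nonlocal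
condition `v_N - v_0 = χ` converges linearly with rate `(1 + τ δ)^{-N} < 1`, both
for the initial value iterates and for the recovered right-hand sides
`φ^k = φ̂ + v^k_0`. -/
theorem stmt_5 {V : Type*} [NormedAddCommGroup V] [InnerProductSpace ℝ V]
    [FiniteDimensional ℝ V]
    (A : V →L[ℝ] V) (hA : ∀ x y : V, ⟪A x, y⟫ = ⟪x, A y⟫)
    (δ : ℝ) (hδ : 0 < δ) (hcoer : ∀ v : V, δ * ‖v‖ ^ 2 ≤ ⟪A v, v⟫)
    (τ : ℝ) (hτ : 0 < τ) (N : ℕ) (hN : 1 ≤ N)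
    (χ φhat : V)
    (v : ℕ → V)
    (hvscheme : ∀ n < N, τ⁻¹ • (v (n + 1) - v n) + A (v (n + 1)) = 0)
    (hvnl : v N - v 0 = χ)
    (φ : V) (hφ : φ = φhat + v 0)
    (vs : ℕ → ℕ → V)
    (hsscheme : ∀ k : ℕ, ∀ n < N, τ⁻¹ • (vs k (n + 1) - vs k n) + A (vs k (n + 1)) = 0)
    (hiter : ∀ k : ℕ, vs (k + 1) 0 = vs k N - χ)
    (φs : ℕ → V) (hφs : ∀ k : ℕ, φs k = φhat + vs k 0) :
    ((1 + τ * δ) ^ N)⁻¹ < 1 ∧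
      (∀ k : ℕ, ‖vs (k + 1) 0 - v 0‖ ≤ ((1 + τ * δ) ^ N)⁻¹ * ‖vs k 0 - v 0‖) ∧
      (∀ k : ℕ, ‖φs (k + 1) - φ‖ ≤ ((1 + τ * δ) ^ N)⁻¹ * ‖vs k 0 - v 0‖) :=
  stmt_5_general A δ hδ hcoer τ hτ N hN χ φhat v hvscheme hvnl φ hφ vs hsscheme hiter φs hφs
end

section
/- Let φ, φ̂, ψ ∈ V and let w : ℝ → V be differentiable on [0,T] with w'(t) + A w(t) = φ for t ∈ [0,T], w(0) = φ̂ and w(T) = ψ. Let (φ^k)_{k∈ℕ} in V and functions w^k : ℝ → V be such that for every k: w^k is differentiable on [0,T] with differentiable derivative, (w^k)'(t) + A w^k(t) = φ^k for t ∈ [0,T], w^k(0) = φ̂, and φ^{k+1} = (w^k)'(T) + A ψ. Then for every k ∈ ℕ, ‖φ^{k+1} − φ‖ ≤ exp(−δ T) · ‖φ^k − φ‖. -/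
open RealInnerProductSpace

/-!
The difference `v = wᵏ - w` solves `v' + A v = φᵏ - φ` with `v(0) = 0`, and the new error is
`φᵏ⁺¹ - φ = v'(T)`. Writing `u = v' = (φᵏ - φ) - A v` gives `u' = -A v' = -A u` with
`u(0) = φᵏ - φ`, and coercivity makes the energy `exp(2δt) ‖u t‖²` nonincreasing, so
`‖u T‖ ≤ exp(-δT) ‖u 0‖`.
-/

section
variable {V : Type*} [NormedAddCommGroup V] [InnerProductSpace ℝ V] {A : V →L[ℝ] V} {δ T : ℝ}

theorem norm_le_exp_neg_mul_norm_of_hasDerivAt_neg_apply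
    (hcoer : ∀ v : V, δ * ‖v‖ ^ 2 ≤ ⟪A v, v⟫) (hT : 0 ≤ T) {u : ℝ → V}
    (hu : ∀ t ∈ Set.Icc 0 T, HasDerivAt u (-A (u t)) t) :
    ‖u T‖ ≤ Real.exp (-δ * T) * ‖u 0‖ := by
  set energy : ℝ → ℝ := fun t => Real.exp (2 * δ * t) * ‖u t‖ ^ 2
  have henergy : ∀ t ∈ Set.Icc 0 T, HasDerivAt energy
      (Real.exp (2 * δ * t) * (2 * (δ * ‖u t‖ ^ 2 - ⟪A (u t), u t⟫))) t := by
    intro t ht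
    refine ((((hasDerivAt_id t).const_mul (2 * δ)).exp).mul (hu t ht).norm_sq).congr_deriv ?_
    rw [inner_neg_right, real_inner_comm, id]
    ring
  have hanti : AntitoneOn energy (Set.Icc 0 T) :=
    antitoneOn_of_hasDerivWithinAt_nonpos (convex_Icc 0 T)
      (fun t ht => (henergy t ht).continuousAt.continuousWithinAt)
      (fun t ht => (henergy t (interior_subset ht)).hasDerivWithinAt)
      (fun t _ => mul_nonpos_of_nonneg_of_nonpos (Real.exp_pos _).le
        (by linarith [hcoer (u t)]))
  have hsq : (Real.exp (δ * T) * ‖u T‖) ^ 2 ≤ ‖u 0‖ ^ 2 := by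
    have := hanti (Set.left_mem_Icc.2 hT) (Set.right_mem_Icc.2 hT) hT
    simpa [energy, mul_pow, ← Real.exp_nat_mul, mul_assoc] using this
  rw [neg_mul, Real.exp_neg, ← div_eq_inv_mul, le_div_iff₀ (Real.exp_pos _), mul_comm]
  exact (sq_le_sq₀ (by positivity) (norm_nonneg _)).1 hsq

theorem hasDerivAt_const_sub_apply {c : V} {v : ℝ → V} {t : ℝ}
    (hv : HasDerivAt v (c - A (v t)) t) :
    HasDerivAt (fun s => c - A (v s)) (-A (c - A (v t))) t := by
  simpa using (A.hasFDerivAt.comp_hasDerivAt t hv).const_sub c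

theorem norm_const_sub_apply_le_exp_neg_mul_norm
    (hcoer : ∀ v : V, δ * ‖v‖ ^ 2 ≤ ⟪A v, v⟫) (hT : 0 ≤ T) {c : V} {v : ℝ → V}
    (hv : ∀ t ∈ Set.Icc 0 T, HasDerivAt v (c - A (v t)) t) (hv0 : v 0 = 0) :
    ‖c - A (v T)‖ ≤ Real.exp (-δ * T) * ‖c‖ := by
  simpa [hv0] using norm_le_exp_neg_mul_norm_of_hasDerivAt_neg_apply hcoer hT
    (u := fun s => c - A (v s)) fun t ht => hasDerivAt_const_sub_apply (hv t ht)

end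

theorem stmt_6_general {V : Type*} [NormedAddCommGroup V] [InnerProductSpace ℝ V]
    (A : V →L[ℝ] V)
    (δ : ℝ) (hcoer : ∀ v : V, δ * ‖v‖ ^ 2 ≤ ⟪A v, v⟫)
    (T : ℝ) (hT : 0 < T)
    (φ φhat ψ : V) (w : ℝ → V)
    (hwdiff : ∀ t ∈ Set.Icc (0 : ℝ) T, DifferentiableAt ℝ w t)
    (hweq : ∀ t ∈ Set.Icc (0 : ℝ) T, deriv w t + A (w t) = φ)
    (hw0 : w 0 = φhat) (hwT : w T = ψ)
    (φs : ℕ → V) (ws : ℕ → ℝ → V)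
    (hsdiff : ∀ k : ℕ, ∀ t ∈ Set.Icc (0 : ℝ) T, DifferentiableAt ℝ (ws k) t)
    (hseq : ∀ k : ℕ, ∀ t ∈ Set.Icc (0 : ℝ) T, deriv (ws k) t + A (ws k t) = φs k)
    (hs0 : ∀ k : ℕ, ws k 0 = φhat)
    (hiter : ∀ k : ℕ, φs (k + 1) = deriv (ws k) T + A ψ) :
    ∀ k : ℕ, ‖φs (k + 1) - φ‖ ≤ Real.exp (-δ * T) * ‖φs k - φ‖ := by
  intro k
  have hdiff : ∀ t ∈ Set.Icc 0 T,
      HasDerivAt (fun s => ws k s - w s) ((φs k - φ) - A (ws k t - w t)) t := by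
    intro t ht
    refine ((hsdiff k t ht).hasDerivAt.sub (hwdiff t ht).hasDerivAt).congr_deriv ?_
    rw [eq_sub_of_add_eq (hseq k t ht), eq_sub_of_add_eq (hweq t ht), map_sub]
    abel
  have hnext : φs (k + 1) - φ = (φs k - φ) - A (ws k T - w T) := by
    rw [hiter k, eq_sub_of_add_eq (hseq k T (Set.right_mem_Icc.2 hT.le)), hwT, map_sub]
    abel
  rw [hnext]
  exact norm_const_sub_apply_le_exp_neg_mul_norm hcoer hT.le hdiff (by simp [hs0 k, hw0])

/-- Semi-discrete iterative identification of the constant right-hand side `φ` of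
`w' + A w = φ` from the final overdetermination `w(T) = ψ`: each iteration
contracts the error with factor `exp(-δ T)`. -/
theorem stmt_6 {V : Type*} [NormedAddCommGroup V] [InnerProductSpace ℝ V]
    [FiniteDimensional ℝ V]
    (A : V →L[ℝ] V) (hA : ∀ x y : V, ⟪A x, y⟫ = ⟪x, A y⟫)
    (δ : ℝ) (hδ : 0 < δ) (hcoer : ∀ v : V, δ * ‖v‖ ^ 2 ≤ ⟪A v, v⟫)
    (T : ℝ) (hT : 0 < T)
    (φ φhat ψ : V) (w : ℝ → V)
    (hwdiff : ∀ t ∈ Set.Icc (0 : ℝ) T, DifferentiableAt ℝ w t)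
    (hweq : ∀ t ∈ Set.Icc (0 : ℝ) T, deriv w t + A (w t) = φ)
    (hw0 : w 0 = φhat) (hwT : w T = ψ)
    (φs : ℕ → V) (ws : ℕ → ℝ → V)
    (hsdiff : ∀ k : ℕ, ∀ t ∈ Set.Icc (0 : ℝ) T, DifferentiableAt ℝ (ws k) t)
    (hsdiff2 : ∀ k : ℕ, ∀ t ∈ Set.Icc (0 : ℝ) T, DifferentiableAt ℝ (deriv (ws k)) t)
    (hseq : ∀ k : ℕ, ∀ t ∈ Set.Icc (0 : ℝ) T, deriv (ws k) t + A (ws k t) = φs k)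
    (hs0 : ∀ k : ℕ, ws k 0 = φhat)
    (hiter : ∀ k : ℕ, φs (k + 1) = deriv (ws k) T + A ψ) :
    ∀ k : ℕ, ‖φs (k + 1) - φ‖ ≤ Real.exp (-δ * T) * ‖φs k - φ‖ :=
  stmt_6_general A δ hcoer T hT φ φhat ψ w hwdiff hweq hw0 hwT φs ws hsdiff hseq hs0 hiter
end

section
/- (Theorem 2.) Let τ > 0, N ≥ 2 a natural number, φ, φ̂, ψ ∈ V. Let w : ℕ → V satisfy w_0 = φ̂, (w_{n+1} − w_n)/τ + A w_{n+1} = φ for 0 ≤ n ≤ N−1, and w_N = ψ. Let (φ^k)_{k∈ℕ} in V and functions w^k : ℕ → V be such that for every k: w^k_0 = φ̂, (w^k_{n+1} − w^k_n)/τ + A w^k_{n+1} = φ^k for 0 ≤ n ≤ N−1, and φ^{k+1} = (w^k_N − w^k_{N−1})/τ + A ψ. Then for every k ∈ ℕ, ‖φ^{k+1} − φ‖ ≤ (1 + τ δ)^{−N} · ‖φ^k − φ‖; in particular the iterative process converges linearly with rate (1 + τ δ)^{−N} < 1. -/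
/-!
Subtracting the exact scheme from the `k`-th one, the error `e = w^k - w` solves the implicit
scheme with right-hand side `g = φ^k - φ` and `e₀ = 0`. Its residual `rₙ = g - A eₙ` runs the
scheme backwards, `rₙ = (1 + τ A) rₙ₊₁`, and coercivity gives `‖(1 + τ A) v‖ ≥ (1 + τ δ) ‖v‖`;
hence `‖r_N‖ ≤ (1 + τ δ)^{-N} ‖r₀‖`. Finally `r₀ = g`, while `r_N = (e_N - e_{N-1}) / τ` is
exactly `φ^{k+1} - φ` by the update rule and `w_N = ψ`.
-/

open RealInnerProductSpace

theorem pow_mul_le_of_mul_succ_le {R : Type*} [Semiring R] [PartialOrder R] [IsOrderedRing R]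
    {a : ℕ → R} {c : R} (hc : 0 ≤ c) :
    ∀ {N : ℕ}, (∀ n < N, c * a (n + 1) ≤ a n) → c ^ N * a N ≤ a 0
  | 0, _ => by simp
  | N + 1, h => calc
      c ^ (N + 1) * a (N + 1) = c ^ N * (c * a (N + 1)) := by rw [pow_succ, mul_assoc]
      _ ≤ c ^ N * a N := mul_le_mul_of_nonneg_left (h N N.lt_succ_self) (pow_nonneg hc N)
      _ ≤ a 0 := pow_mul_le_of_mul_succ_le hc fun n hn => h n (hn.trans N.lt_succ_self)

section Coercive

variable {V : Type*} [NormedAddCommGroup V] [InnerProductSpace ℝ V]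

theorem mul_norm_le_norm_add_smul_of_coercive_s7 {A : V → V} {δ τ : ℝ}
    (hcoer : ∀ v : V, δ * ‖v‖ ^ 2 ≤ ⟪A v, v⟫) (hτ : 0 ≤ τ) (v : V) :
    (1 + τ * δ) * ‖v‖ ≤ ‖v + τ • A v‖ := by
  rcases (norm_nonneg v).eq_or_lt with hv | hv
  · rw [← hv, mul_zero]
    exact norm_nonneg _
  refine le_of_mul_le_mul_right ?_ hv
  calc (1 + τ * δ) * ‖v‖ * ‖v‖ = ‖v‖ ^ 2 + τ * (δ * ‖v‖ ^ 2) := by ring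
    _ ≤ ‖v‖ ^ 2 + τ * ⟪A v, v⟫ := by gcongr; exact hcoer v
    _ = ⟪v + τ • A v, v⟫ := by
      rw [inner_add_left, real_inner_smul_left, real_inner_self_eq_norm_sq]
    _ ≤ ‖v + τ • A v‖ * ‖v‖ := real_inner_le_norm _ _

end Coercive

def IsImplicitEuler {V F : Type*} [AddCommGroup V] [Module ℝ V] [FunLike F V V] (A : F)
    (τ : ℝ) (N : ℕ) (f : V) (w : ℕ → V) : Prop :=
  ∀ n < N, τ⁻¹ • (w (n + 1) - w n) + A (w (n + 1)) = f

namespace IsImplicitEuler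

variable {V F : Type*} [AddCommGroup V] [Module ℝ V] [FunLike F V V] {A : F} {τ : ℝ} {N : ℕ}
  {f g : V} {w v : ℕ → V}

theorem sub [LinearMapClass F ℝ V V] (hw : IsImplicitEuler A τ N f w)
    (hv : IsImplicitEuler A τ N g v) :
    IsImplicitEuler A τ N (f - g) (w - v) := by
  intro n hn
  rw [← hw n hn, ← hv n hn]
  simp only [Pi.sub_apply, map_sub]
  module

theorem inv_smul_sub_eq (hw : IsImplicitEuler A τ N f w) {n : ℕ} (hn : n < N) :
    τ⁻¹ • (w (n + 1) - w n) = f - A (w (n + 1)) :=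
  eq_sub_of_add_eq (hw n hn)

theorem residual_eq [LinearMapClass F ℝ V V] (hw : IsImplicitEuler A τ N f w) (hτ : τ ≠ 0)
    {n : ℕ} (hn : n < N) :
    f - A (w n) = (f - A (w (n + 1))) + τ • A (f - A (w (n + 1))) := by
  have hstep : w (n + 1) - w n = τ • (f - A (w (n + 1))) := by
    rw [← hw.inv_smul_sub_eq hn, smul_inv_smul₀ hτ]
  rw [← map_smul, ← hstep, map_sub]
  abel

theorem pow_mul_norm_residual_le {V F : Type*} [NormedAddCommGroup V] [InnerProductSpace ℝ V]
    [FunLike F V V] [LinearMapClass F ℝ V V] {A : F} {δ τ : ℝ} {N : ℕ} {f : V} {w : ℕ → V}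
    (hδ : 0 ≤ δ) (hcoer : ∀ v : V, δ * ‖v‖ ^ 2 ≤ ⟪A v, v⟫) (hτ : 0 < τ)
    (hw : IsImplicitEuler A τ N f w) :
    (1 + τ * δ) ^ N * ‖f - A (w N)‖ ≤ ‖f - A (w 0)‖ := by
  refine pow_mul_le_of_mul_succ_le (a := fun n => ‖f - A (w n)‖) ?_ fun n hn => ?_
  · positivity
  · rw [hw.residual_eq hτ.ne' hn]
    exact mul_norm_le_norm_add_smul_of_coercive_s7 hcoer hτ.le _

end IsImplicitEuler

theorem stmt_7_general {V : Type*} [NormedAddCommGroup V] [InnerProductSpace ℝ V]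
    (A : V →L[ℝ] V)
    (δ : ℝ) (hδ : 0 < δ) (hcoer : ∀ v : V, δ * ‖v‖ ^ 2 ≤ ⟪A v, v⟫)
    (τ : ℝ) (hτ : 0 < τ) (N : ℕ) (hN : 2 ≤ N)
    (φ φhat ψ : V)
    (w : ℕ → V) (hw0 : w 0 = φhat)
    (hwscheme : ∀ n < N, τ⁻¹ • (w (n + 1) - w n) + A (w (n + 1)) = φ)
    (hwN : w N = ψ)
    (φs : ℕ → V) (ws : ℕ → ℕ → V)
    (hs0 : ∀ k : ℕ, ws k 0 = φhat)
    (hsscheme : ∀ k : ℕ, ∀ n < N, τ⁻¹ • (ws k (n + 1) - ws k n) + A (ws k (n + 1)) = φs k)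
    (hiter : ∀ k : ℕ, φs (k + 1) = τ⁻¹ • (ws k N - ws k (N - 1)) + A ψ) :
    ((1 + τ * δ) ^ N)⁻¹ < 1 ∧
      ∀ k : ℕ, ‖φs (k + 1) - φ‖ ≤ ((1 + τ * δ) ^ N)⁻¹ * ‖φs k - φ‖ := by
  have hrate : 1 < (1 + τ * δ) ^ N :=
    one_lt_pow₀ (lt_add_of_pos_right 1 (mul_pos hτ hδ)) (by omega)
  refine ⟨inv_lt_one_of_one_lt₀ hrate, fun k => ?_⟩
  have herr : IsImplicitEuler A τ N (φs k - φ) (ws k - w) :=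
    IsImplicitEuler.sub (hsscheme k) hwscheme
  have hlast : N - 1 + 1 = N := by omega
  have hres0 : φs k - φ - A ((ws k - w) 0) = φs k - φ := by simp [hs0 k, hw0]
  have hresN : φs k - φ - A ((ws k - w) N) = φs (k + 1) - φ := by
    have h := herr.inv_smul_sub_eq (n := N - 1) (by omega)
    have hφ := hwscheme (N - 1) (by omega)
    rw [hlast] at h hφ
    rw [← h, hiter k, ← hφ]
    simp only [Pi.sub_apply, hwN]
    module
  rw [le_inv_mul_iff₀ (zero_lt_one.trans hrate), ← hres0, ← hresN]
  exact herr.pow_mul_norm_residual_le hδ.le hcoer hτ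

/-- Theorem 2: the discrete iterative identification of the constant right-hand side
`φ` of the fully implicit scheme from final overdetermination `w_N = ψ` converges
linearly with rate `(1 + τ δ)^{-N} < 1`. -/
theorem stmt_7 {V : Type*} [NormedAddCommGroup V] [InnerProductSpace ℝ V]
    [FiniteDimensional ℝ V]
    (A : V →L[ℝ] V) (hA : ∀ x y : V, ⟪A x, y⟫ = ⟪x, A y⟫)
    (δ : ℝ) (hδ : 0 < δ) (hcoer : ∀ v : V, δ * ‖v‖ ^ 2 ≤ ⟪A v, v⟫)
    (τ : ℝ) (hτ : 0 < τ) (N : ℕ) (hN : 2 ≤ N)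
    (φ φhat ψ : V)
    (w : ℕ → V) (hw0 : w 0 = φhat)
    (hwscheme : ∀ n < N, τ⁻¹ • (w (n + 1) - w n) + A (w (n + 1)) = φ)
    (hwN : w N = ψ)
    (φs : ℕ → V) (ws : ℕ → ℕ → V)
    (hs0 : ∀ k : ℕ, ws k 0 = φhat)
    (hsscheme : ∀ k : ℕ, ∀ n < N, τ⁻¹ • (ws k (n + 1) - ws k n) + A (ws k (n + 1)) = φs k)
    (hiter : ∀ k : ℕ, φs (k + 1) = τ⁻¹ • (ws k N - ws k (N - 1)) + A ψ) :
    ((1 + τ * δ) ^ N)⁻¹ < 1 ∧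
      ∀ k : ℕ, ‖φs (k + 1) - φ‖ ≤ ((1 + τ * δ) ^ N)⁻¹ * ‖φs k - φ‖ :=
  stmt_7_general A δ hδ hcoer τ hτ N hN φ φhat ψ w hw0 hwscheme hwN φs ws hs0 hsscheme hiter
end

section
/- Under the hypotheses of Theorem 2 (exact discrete solution w : ℕ → V with w_0 = φ̂, (w_{n+1} − w_n)/τ + A w_{n+1} = φ for 0 ≤ n ≤ N−1, w_N = ψ; iterates w^k with w^k_0 = φ̂, (w^k_{n+1} − w^k_n)/τ + A w^k_{n+1} = φ^k for 0 ≤ n ≤ N−1 and φ^{k+1} = (w^k_N − w^k_{N−1})/τ + A ψ), it holds for every k ∈ ℕ that ‖φ^k − φ‖ ≤ (1 + τ δ)^{−N k} · ‖φ^0 − φ‖. -/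
/-!
The error `z = w^k - w` solves the implicit scheme with the constant source `e = φ^k - φ` and
zero initial value. Its residual `u n = e - A (z n)`, which equals `(z n - z (n-1)) / τ`, satisfies
`u (n-1) = (I + τ A) (u n)`, and coercivity gives `‖(I + τ A) v‖ ≥ (1 + τ δ) ‖v‖`. Hence one sweep
shrinks the residual by `(1 + τ δ)^{-N}`, and `φ^{k+1} - φ` is exactly the final residual `u N`.
-/

open RealInnerProductSpace

section

variable {V : Type*} [NormedAddCommGroup V] [InnerProductSpace ℝ V] {δ τ : ℝ}

theorem norm_le_inv_mul_norm_add_smul {A : V → V} (hcoer : ∀ v : V, δ * ‖v‖ ^ 2 ≤ ⟪A v, v⟫)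
    (hτ : 0 ≤ τ) (hδ : 0 ≤ δ) (v : V) : ‖v‖ ≤ (1 + τ * δ)⁻¹ * ‖v + τ • A v‖ := by
  rw [le_inv_mul_iff₀ (by positivity)]
  rcases (norm_nonneg v).eq_or_lt with hv | hv
  · rw [← hv, mul_zero]
    exact norm_nonneg _
  have hinner : (1 + τ * δ) * ‖v‖ ^ 2 ≤ ⟪v + τ • A v, v⟫ := by
    rw [inner_add_left, real_inner_smul_left, real_inner_self_eq_norm_sq]
    nlinarith [hcoer v]
  have hcs : ⟪v + τ • A v, v⟫ ≤ ‖v + τ • A v‖ * ‖v‖ := real_inner_le_norm _ _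
  nlinarith

variable {A : V →L[ℝ] V} {z : ℕ → V} {e : V} {N : ℕ}

theorem implicitEuler_residual_eq (hτ : τ ≠ 0) {n : ℕ}
    (hz : τ⁻¹ • (z (n + 1) - z n) + A (z (n + 1)) = e) :
    e - A (z n) = (e - A (z (n + 1))) + τ • A (e - A (z (n + 1))) := by
  have hdiff : z (n + 1) - z n = τ • (e - A (z (n + 1))) := by
    rw [← hz, add_sub_cancel_right, smul_inv_smul₀ hτ]
  calc e - A (z n) = (e - A (z (n + 1))) + A (z (n + 1) - z n) := by rw [map_sub]; abel
    _ = _ := by rw [hdiff, map_smul]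

theorem norm_implicitEuler_residual_le (hcoer : ∀ v : V, δ * ‖v‖ ^ 2 ≤ ⟪A v, v⟫)
    (hτ : 0 < τ) (hδ : 0 ≤ δ)
    (hz : ∀ n < N, τ⁻¹ • (z (n + 1) - z n) + A (z (n + 1)) = e) :
    ‖e - A (z N)‖ ≤ (1 + τ * δ)⁻¹ ^ N * ‖e - A (z 0)‖ :=
  le_geom (u := fun n => ‖e - A (z n)‖) (by positivity) N fun n hn => by
    rw [implicitEuler_residual_eq hτ.ne' (hz n hn)]
    exact norm_le_inv_mul_norm_add_smul hcoer hτ.le hδ _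

theorem norm_implicitEuler_update_sub_le (hcoer : ∀ v : V, δ * ‖v‖ ^ 2 ≤ ⟪A v, v⟫)
    (hτ : 0 < τ) (hδ : 0 ≤ δ) (hN : 0 < N) {w v : ℕ → V} {φ φ' : V}
    (hw : ∀ n < N, τ⁻¹ • (w (n + 1) - w n) + A (w (n + 1)) = φ)
    (hv : ∀ n < N, τ⁻¹ • (v (n + 1) - v n) + A (v (n + 1)) = φ') (hv0 : v 0 = w 0) :
    ‖τ⁻¹ • (v N - v (N - 1)) + A (w N) - φ‖ ≤ (1 + τ * δ)⁻¹ ^ N * ‖φ' - φ‖ := by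
  have herr : ∀ n < N, τ⁻¹ • ((v - w) (n + 1) - (v - w) n) + A ((v - w) (n + 1)) = φ' - φ := by
    intro n hn
    rw [← hv n hn, ← hw n hn]
    simp only [Pi.sub_apply, map_sub, smul_sub]
    abel
  have hupdate : τ⁻¹ • (v N - v (N - 1)) + A (w N) - φ = φ' - φ - A ((v - w) N) := by
    have hlast := hv (N - 1) (Nat.sub_lt hN one_pos)
    rw [Nat.sub_add_cancel (show 1 ≤ N from hN)] at hlast
    rw [← hlast, Pi.sub_apply, map_sub]
    abel
  have hinit : A ((v - w) 0) = 0 := by rw [Pi.sub_apply, hv0, sub_self, map_zero]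
  simpa only [hupdate, hinit, sub_zero] using norm_implicitEuler_residual_le hcoer hτ hδ herr

end

theorem stmt_8_general {V : Type*} [NormedAddCommGroup V] [InnerProductSpace ℝ V]
    (A : V →L[ℝ] V)
    (δ : ℝ) (hδ : 0 < δ) (hcoer : ∀ v : V, δ * ‖v‖ ^ 2 ≤ ⟪A v, v⟫)
    (τ : ℝ) (hτ : 0 < τ) (N : ℕ) (hN : 2 ≤ N)
    (φ φhat ψ : V)
    (w : ℕ → V) (hw0 : w 0 = φhat)
    (hwscheme : ∀ n < N, τ⁻¹ • (w (n + 1) - w n) + A (w (n + 1)) = φ)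
    (hwN : w N = ψ)
    (φs : ℕ → V) (ws : ℕ → ℕ → V)
    (hs0 : ∀ k : ℕ, ws k 0 = φhat)
    (hsscheme : ∀ k : ℕ, ∀ n < N, τ⁻¹ • (ws k (n + 1) - ws k n) + A (ws k (n + 1)) = φs k)
    (hiter : ∀ k : ℕ, φs (k + 1) = τ⁻¹ • (ws k N - ws k (N - 1)) + A ψ) :
    ∀ k : ℕ, ‖φs k - φ‖ ≤ ((1 + τ * δ) ^ (N * k))⁻¹ * ‖φs 0 - φ‖ := by
  intro k
  rw [pow_mul, ← inv_pow, ← inv_pow]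
  refine le_geom (u := fun j => ‖φs j - φ‖) (by positivity) k fun j _ => ?_
  rw [hiter j, ← hwN]
  exact norm_implicitEuler_update_sub_le hcoer hτ hδ.le (by omega) hwscheme (hsscheme j)
    (by rw [hs0, hw0])

/-- Geometric convergence of the discrete right-hand side identification:
`‖φ^k - φ‖ ≤ (1 + τ δ)^{-N k} ‖φ^0 - φ‖`. -/
theorem stmt_8 {V : Type*} [NormedAddCommGroup V] [InnerProductSpace ℝ V]
    [FiniteDimensional ℝ V]
    (A : V →L[ℝ] V) (hA : ∀ x y : V, ⟪A x, y⟫ = ⟪x, A y⟫)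
    (δ : ℝ) (hδ : 0 < δ) (hcoer : ∀ v : V, δ * ‖v‖ ^ 2 ≤ ⟪A v, v⟫)
    (τ : ℝ) (hτ : 0 < τ) (N : ℕ) (hN : 2 ≤ N)
    (φ φhat ψ : V)
    (w : ℕ → V) (hw0 : w 0 = φhat)
    (hwscheme : ∀ n < N, τ⁻¹ • (w (n + 1) - w n) + A (w (n + 1)) = φ)
    (hwN : w N = ψ)
    (φs : ℕ → V) (ws : ℕ → ℕ → V)
    (hs0 : ∀ k : ℕ, ws k 0 = φhat)
    (hsscheme : ∀ k : ℕ, ∀ n < N, τ⁻¹ • (ws k (n + 1) - ws k n) + A (ws k (n + 1)) = φs k)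
    (hiter : ∀ k : ℕ, φs (k + 1) = τ⁻¹ • (ws k N - ws k (N - 1)) + A ψ) :
    ∀ k : ℕ, ‖φs k - φ‖ ≤ ((1 + τ * δ) ^ (N * k))⁻¹ * ‖φs 0 - φ‖ :=
  stmt_8_general A δ hδ hcoer τ hτ N hN φ φhat ψ w hw0 hwscheme hwN φs ws hs0 hsscheme hiter
end

section
/- Let ω : ℝ → ℝ be continuous and nonnegative on [0,T], and let v : ℝ → V be differentiable on [0,T] with v'(t) + A v(t) = 0 for t ∈ [0,T]. Then ‖∫₀ᵀ ω(t) v(t) dt‖ ≤ (∫₀ᵀ ω(t) exp(−δ t) dt) · ‖v(0)‖. -/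
/-! Coercivity gives `⟪v, v'⟫ = -⟪A v, v⟫ ≤ -δ ‖v‖²`, so the Lyapunov function
`exp (2 δ t) ‖v t‖²` is nonincreasing and `‖v t‖ ≤ exp (-δ t) ‖v 0‖`. Since `ω ≥ 0`, integrating
this pointwise bound against `ω` gives the estimate. -/

open RealInnerProductSpace Set MeasureTheory

section

variable {V : Type*} [NormedAddCommGroup V] [InnerProductSpace ℝ V]

theorem HasDerivAt.exp_mul_norm_sq {v : ℝ → V} {v' : V} {t : ℝ} (c : ℝ)
    (hv : HasDerivAt v v' t) :
    HasDerivAt (fun s => Real.exp (c * s) * ‖v s‖ ^ 2)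
      (Real.exp (c * t) * (c * ‖v t‖ ^ 2 + 2 * ⟪v t, v'⟫)) t := by
  have hexp : HasDerivAt (fun s => Real.exp (c * s)) (Real.exp (c * t) * c) t := by
    simpa using ((hasDerivAt_id t).const_mul c).exp
  exact (hexp.mul hv.norm_sq).congr_deriv (by ring)

theorem norm_le_exp_mul_norm_of_inner_deriv_le {v : ℝ → V} {δ T t : ℝ}
    (hv : ∀ s ∈ Icc 0 T, DifferentiableAt ℝ v s)
    (hdiss : ∀ s ∈ Icc 0 T, ⟪v s, deriv v s⟫ ≤ -δ * ‖v s‖ ^ 2) (ht : t ∈ Icc 0 T) :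
    ‖v t‖ ≤ Real.exp (-δ * t) * ‖v 0‖ := by
  set g : ℝ → ℝ := fun s => Real.exp (2 * δ * s) * ‖v s‖ ^ 2
  have hg : ∀ s ∈ Icc 0 T, HasDerivAt g
      (Real.exp (2 * δ * s) * (2 * δ * ‖v s‖ ^ 2 + 2 * ⟪v s, deriv v s⟫)) s :=
    fun s hs => (hv s hs).hasDerivAt.exp_mul_norm_sq (2 * δ)
  have hanti : AntitoneOn g (Icc 0 T) := by
    refine antitoneOn_of_hasDerivWithinAt_nonpos (convex_Icc 0 T)
      (fun s hs => (hg s hs).continuousAt.continuousWithinAt)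
      (fun s hs => (hg s (interior_subset hs)).hasDerivWithinAt) fun s hs => ?_
    have := hdiss s (interior_subset hs)
    exact mul_nonpos_of_nonneg_of_nonpos (Real.exp_pos _).le (by linarith)
  have hgt : g t ≤ g 0 := hanti ⟨le_rfl, ht.1.trans ht.2⟩ ht ht.1
  have hsq : (Real.exp (δ * t) * ‖v t‖) ^ 2 ≤ ‖v 0‖ ^ 2 := by
    simpa [g, mul_pow, ← Real.exp_nat_mul, ← mul_assoc] using hgt
  calc ‖v t‖ = Real.exp (-δ * t) * (Real.exp (δ * t) * ‖v t‖) := by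
        rw [← mul_assoc, ← Real.exp_add]; simp
    _ ≤ Real.exp (-δ * t) * ‖v 0‖ := by
        gcongr
        exact (pow_le_pow_iff_left₀ (by positivity) (norm_nonneg _) two_ne_zero).1 hsq

theorem norm_intervalIntegral_smul_le {ω g : ℝ → ℝ} {v : ℝ → V} {a b : ℝ} (hab : a ≤ b)
    (hω : ∀ t ∈ Icc a b, 0 ≤ ω t) (hvg : ∀ t ∈ Icc a b, ‖v t‖ ≤ g t)
    (hωg : IntervalIntegrable (fun t => ω t * g t) volume a b) :
    ‖∫ t in a..b, ω t • v t‖ ≤ ∫ t in a..b, ω t * g t := by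
  refine intervalIntegral.norm_integral_le_of_norm_le hab (ae_of_all _ fun t ht => ?_) hωg
  have ht' : t ∈ Icc a b := Ioc_subset_Icc_self ht
  rw [norm_smul, Real.norm_of_nonneg (hω t ht')]
  exact mul_le_mul_of_nonneg_left (hvg t ht') (hω t ht')

end

theorem stmt_9_general {V : Type*} [NormedAddCommGroup V] [InnerProductSpace ℝ V]
    (A : V →L[ℝ] V)
    (δ : ℝ) (hcoer : ∀ v : V, δ * ‖v‖ ^ 2 ≤ ⟪A v, v⟫)
    (T : ℝ) (hT : 0 < T)
    (ω : ℝ → ℝ)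
    (hωc : ContinuousOn ω (Set.Icc (0 : ℝ) T))
    (hωpos : ∀ t ∈ Set.Icc (0 : ℝ) T, 0 ≤ ω t)
    (v : ℝ → V)
    (hvdiff : ∀ t ∈ Set.Icc (0 : ℝ) T, DifferentiableAt ℝ v t)
    (hveq : ∀ t ∈ Set.Icc (0 : ℝ) T, deriv v t + A (v t) = 0) :
    ‖∫ t in (0 : ℝ)..T, ω t • v t‖ ≤
      (∫ t in (0 : ℝ)..T, ω t * Real.exp (-δ * t)) * ‖v 0‖ := by
  have hdiss : ∀ t ∈ Icc 0 T, ⟪v t, deriv v t⟫ ≤ -δ * ‖v t‖ ^ 2 := fun t ht => by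
    rw [eq_neg_of_add_eq_zero_left (hveq t ht), inner_neg_right, real_inner_comm]
    linarith [hcoer (v t)]
  have hint : IntervalIntegrable (fun t => ω t * (Real.exp (-δ * t) * ‖v 0‖)) volume 0 T := by
    refine ContinuousOn.intervalIntegrable ?_
    rw [uIcc_of_le hT.le]
    exact hωc.mul (by fun_prop)
  calc ‖∫ t in (0 : ℝ)..T, ω t • v t‖
      ≤ ∫ t in (0 : ℝ)..T, ω t * (Real.exp (-δ * t) * ‖v 0‖) :=
        norm_intervalIntegral_smul_le hT.le hωpos
          (fun t ht => norm_le_exp_mul_norm_of_inner_deriv_le hvdiff hdiss ht) hint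
    _ = (∫ t in (0 : ℝ)..T, ω t * Real.exp (-δ * t)) * ‖v 0‖ := by
        simp_rw [← mul_assoc]
        exact intervalIntegral.integral_mul_const _ _

/-- Weighted-integral estimate for the homogeneous equation `v' + A v = 0`:
`‖∫₀ᵀ ω(t) v(t) dt‖ ≤ (∫₀ᵀ ω(t) exp(-δ t) dt) ‖v(0)‖`. -/
theorem stmt_9 {V : Type*} [NormedAddCommGroup V] [InnerProductSpace ℝ V]
    [FiniteDimensional ℝ V]
    (A : V →L[ℝ] V) (hA : ∀ x y : V, ⟪A x, y⟫ = ⟪x, A y⟫)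
    (δ : ℝ) (hδ : 0 < δ) (hcoer : ∀ v : V, δ * ‖v‖ ^ 2 ≤ ⟪A v, v⟫)
    (T : ℝ) (hT : 0 < T)
    (ω : ℝ → ℝ)
    (hωc : ContinuousOn ω (Set.Icc (0 : ℝ) T))
    (hωpos : ∀ t ∈ Set.Icc (0 : ℝ) T, 0 ≤ ω t)
    (v : ℝ → V)
    (hvdiff : ∀ t ∈ Set.Icc (0 : ℝ) T, DifferentiableAt ℝ v t)
    (hveq : ∀ t ∈ Set.Icc (0 : ℝ) T, deriv v t + A (v t) = 0) :
    ‖∫ t in (0 : ℝ)..T, ω t • v t‖ ≤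
      (∫ t in (0 : ℝ)..T, ω t * Real.exp (-δ * t)) * ‖v 0‖ :=
  stmt_9_general A δ hcoer T hT ω hωc hωpos v hvdiff hveq
end

section
/- (Theorem 3.) Let ω : ℝ → ℝ be continuous and nonnegative on [0,T] with ∫₀ᵀ ω(t) dt = 1, and set ϱ = ∫₀ᵀ ω(t) exp(−δ t) dt. Let φ, φ̂, ψ ∈ V and let w : ℝ → V be continuously differentiable on [0,T] with w'(t) + A w(t) = φ for t ∈ [0,T], w(0) = φ̂ and ∫₀ᵀ ω(t) w(t) dt = ψ. Let (φ^k)_{k∈ℕ} in V and functions w^k : ℝ → V be such that for every k: w^k is continuously differentiable on [0,T], (w^k)'(t) + A w^k(t) = φ^k for t ∈ [0,T], w^k(0) = φ̂, and φ^{k+1} = ∫₀ᵀ ω(t) (w^k)'(t) dt + A ψ. Then for every k ∈ ℕ, ‖φ^{k+1} − φ‖ ≤ ϱ · ‖φ^k − φ‖. -/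
/-!
The error `u = wᵏ - w` solves `u' + A u = φᵏ - φ` with `u 0 = 0`, so `f = u' = (φᵏ - φ) - A u`
solves `f' = -A f` with `f 0 = φᵏ - φ`, and coercivity gives `‖f t‖ ≤ exp (-δ t) ‖φᵏ - φ‖`.
Integrating the equations for `wᵏ` and `w` against `ω`, using `∫ ω = 1` and the
overdetermination `∫ ω w = ψ`, gives `φᵏ⁺¹ - φ = ∫₀ᵀ ω f`, whence the contraction.
-/

open RealInnerProductSpace Real Set MeasureTheory intervalIntegral

theorem hasDerivAt_of_deriv_add_apply_eq {E : Type*} [NormedAddCommGroup E] [NormedSpace ℝ E]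
    {g : E → E} {x : ℝ → E} {c : E} {t : ℝ} (hx : DifferentiableAt ℝ x t)
    (heq : deriv x t + g (x t) = c) : HasDerivAt x (c - g (x t)) t := by
  rw [← heq, add_sub_cancel_right]
  exact hx.hasDerivAt

theorem norm_le_exp_mul_norm_of_hasDerivAt_neg_apply {V : Type*} [NormedAddCommGroup V]
    [InnerProductSpace ℝ V] {A : V →L[ℝ] V} {δ T : ℝ} (hcoer : ∀ v : V, δ * ‖v‖ ^ 2 ≤ ⟪A v, v⟫)
    {f : ℝ → V} (hf : ∀ t ∈ Icc 0 T, HasDerivAt f (-A (f t)) t) {t : ℝ} (ht : t ∈ Icc 0 T) :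
    ‖f t‖ ≤ exp (-δ * t) * ‖f 0‖ := by
  -- `E` is antitone: its derivative is `2 exp (2δs) (δ ‖f s‖² - ⟪A (f s), f s⟫) ≤ 0`.
  set E : ℝ → ℝ := fun s => exp (2 * δ * s) * ‖f s‖ ^ 2
  have hE : ∀ s ∈ Icc 0 T,
      HasDerivAt E (2 * exp (2 * δ * s) * (δ * ‖f s‖ ^ 2 - ⟪A (f s), f s⟫)) s := by
    intro s hs
    refine ((((hasDerivAt_id s).const_mul (2 * δ)).exp).mul (hf s hs).norm_sq).congr_deriv ?_
    simp only [id, mul_one, inner_neg_right, real_inner_comm (f s)]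
    ring
  have hanti : AntitoneOn E (Icc 0 T) :=
    antitoneOn_of_hasDerivWithinAt_nonpos (convex_Icc 0 T)
      (continuousOn_of_forall_continuousAt fun s hs => (hE s hs).continuousAt)
      (fun s hs => (hE s (interior_subset hs)).hasDerivWithinAt)
      (fun s _ => mul_nonpos_of_nonneg_of_nonpos (by positivity) (sub_nonpos.2 (hcoer _)))
  have hle : E t ≤ E 0 := hanti ⟨le_rfl, ht.1.trans ht.2⟩ ht ht.1
  rw [← pow_le_pow_iff_left₀ (norm_nonneg _) (by positivity) two_ne_zero]
  calc ‖f t‖ ^ 2 = exp (-δ * t) ^ 2 * E t := by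
        simp only [E, ← mul_assoc, ← exp_nat_mul, ← exp_add]
        ring_nf
        simp
    _ ≤ exp (-δ * t) ^ 2 * E 0 := by gcongr
    _ = (exp (-δ * t) * ‖f 0‖) ^ 2 := by simp [E, mul_pow]

theorem intervalIntegral.integral_smul_sub_apply_of_integral_eq_one {E F : Type*}
    [NormedAddCommGroup E] [NormedSpace ℝ E] [CompleteSpace E]
    [NormedAddCommGroup F] [NormedSpace ℝ F] [CompleteSpace F]
    {a b : ℝ} {ω : ℝ → ℝ} {x : ℝ → E} (L : E →L[ℝ] F) (c : F)
    (hω : ∫ t in a..b, ω t = 1) (hωx : IntervalIntegrable (fun t => ω t • x t) volume a b) :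
    ∫ t in a..b, ω t • (c - L (x t)) = c - L (∫ t in a..b, ω t • x t) := by
  have hωi : IntervalIntegrable ω volume a b :=
    intervalIntegrable_of_integral_ne_zero (by rw [hω]; exact one_ne_zero)
  simp_rw [smul_sub, ← map_smul]
  rw [integral_sub ⟨hωi.1.smul_const c, hωi.2.smul_const c⟩
      ⟨L.integrable_comp hωx.1, L.integrable_comp hωx.2⟩, integral_smul_const, hω,
    one_smul, L.intervalIntegral_comp_comm hωx]

theorem stmt_10_general {V : Type*} [NormedAddCommGroup V] [InnerProductSpace ℝ V]
    [FiniteDimensional ℝ V]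
    (A : V →L[ℝ] V)
    (δ : ℝ) (hcoer : ∀ v : V, δ * ‖v‖ ^ 2 ≤ ⟪A v, v⟫)
    (T : ℝ) (hT : 0 < T)
    (ω : ℝ → ℝ)
    (hωc : ContinuousOn ω (Set.Icc (0 : ℝ) T))
    (hωpos : ∀ t ∈ Set.Icc (0 : ℝ) T, 0 ≤ ω t)
    (hωint : (∫ t in (0 : ℝ)..T, ω t) = 1)
    (ϱ : ℝ) (hϱ : ϱ = ∫ t in (0 : ℝ)..T, ω t * Real.exp (-δ * t))
    (φ φhat ψ : V) (w : ℝ → V)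
    (hwdiff : ∀ t ∈ Set.Icc (0 : ℝ) T, DifferentiableAt ℝ w t)
    (hweq : ∀ t ∈ Set.Icc (0 : ℝ) T, deriv w t + A (w t) = φ)
    (hw0 : w 0 = φhat)
    (hwover : (∫ t in (0 : ℝ)..T, ω t • w t) = ψ)
    (φs : ℕ → V) (ws : ℕ → ℝ → V)
    (hsdiff : ∀ k : ℕ, ∀ t ∈ Set.Icc (0 : ℝ) T, DifferentiableAt ℝ (ws k) t)
    (hseq : ∀ k : ℕ, ∀ t ∈ Set.Icc (0 : ℝ) T, deriv (ws k) t + A (ws k t) = φs k)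
    (hs0 : ∀ k : ℕ, ws k 0 = φhat)
    (hiter : ∀ k : ℕ, φs (k + 1) = (∫ t in (0 : ℝ)..T, ω t • deriv (ws k) t) + A ψ) :
    ∀ k : ℕ, ‖φs (k + 1) - φ‖ ≤ ϱ * ‖φs k - φ‖ := by
  intro k
  have hw t ht := hasDerivAt_of_deriv_add_apply_eq (hwdiff t ht) (hweq t ht)
  have hwk t ht := hasDerivAt_of_deriv_add_apply_eq (hsdiff k t ht) (hseq k t ht)
  have hωsmul {x : ℝ → V} (hx : ∀ t ∈ Icc 0 T, DifferentiableAt ℝ x t) :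
      IntervalIntegrable (fun t => ω t • x t) volume 0 T :=
    (hωc.smul (continuousOn_of_forall_continuousAt fun t ht => (hx t ht).continuousAt))
      |>.intervalIntegrable_of_Icc hT.le
  set e := φs k - φ
  set u : ℝ → V := fun t => ws k t - w t
  have hu : ∀ t ∈ Icc 0 T, HasDerivAt u (e - A (u t)) t := fun t ht =>
    ((hwk t ht).sub (hw t ht)).congr_deriv (by simp only [e, u, map_sub]; abel)
  have hdecay : ∀ t ∈ Icc 0 T, ‖e - A (u t)‖ ≤ exp (-δ * t) * ‖e‖ := fun t ht => by
    simpa [u, hw0, hs0] using norm_le_exp_mul_norm_of_hasDerivAt_neg_apply hcoer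
      (fun s hs => (A.hasFDerivAt.comp_hasDerivAt s (hu s hs)).const_sub e) ht
  have herror : φs (k + 1) - φ = ∫ t in (0 : ℝ)..T, ω t • (e - A (u t)) := by
    have hderiv : ∫ t in (0 : ℝ)..T, ω t • deriv (ws k) t
        = ∫ t in (0 : ℝ)..T, ω t • (φs k - A (ws k t)) :=
      integral_congr fun t ht => by rw [(hwk t (uIcc_of_le hT.le ▸ ht)).deriv]
    have hsplit : ∫ t in (0 : ℝ)..T, ω t • u t
        = (∫ t in (0 : ℝ)..T, ω t • ws k t) - ∫ t in (0 : ℝ)..T, ω t • w t := by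
      simp only [u, smul_sub]
      exact integral_sub (hωsmul (hsdiff k)) (hωsmul hwdiff)
    rw [hiter k, hderiv, integral_smul_sub_apply_of_integral_eq_one A _ hωint (hωsmul (hsdiff k)),
      integral_smul_sub_apply_of_integral_eq_one A e hωint
        (hωsmul fun t ht => (hu t ht).differentiableAt), hsplit, hwover, map_sub]
    simp only [e]
    abel
  rw [herror, hϱ, ← intervalIntegral.integral_mul_const]
  refine norm_integral_le_of_norm_le hT.le (ae_of_all _ fun t ht => ?_) ?_
  · have hωt := hωpos t (Ioc_subset_Icc_self ht)
    rw [norm_smul, norm_of_nonneg hωt, mul_assoc]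
    exact mul_le_mul_of_nonneg_left (hdecay t (Ioc_subset_Icc_self ht)) hωt
  · exact ((hωc.mul (by fun_prop)).mul continuousOn_const).intervalIntegrable_of_Icc hT.le

/-- Theorem 3: the iterative identification of the constant right-hand side `φ` of
`w' + A w = φ` from the integral overdetermination `∫₀ᵀ ω(t) w(t) dt = ψ` contracts
with factor `ϱ = ∫₀ᵀ ω(t) exp(-δ t) dt`. -/
theorem stmt_10 {V : Type*} [NormedAddCommGroup V] [InnerProductSpace ℝ V]
    [FiniteDimensional ℝ V]
    (A : V →L[ℝ] V) (hA : ∀ x y : V, ⟪A x, y⟫ = ⟪x, A y⟫)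
    (δ : ℝ) (hδ : 0 < δ) (hcoer : ∀ v : V, δ * ‖v‖ ^ 2 ≤ ⟪A v, v⟫)
    (T : ℝ) (hT : 0 < T)
    (ω : ℝ → ℝ)
    (hωc : ContinuousOn ω (Set.Icc (0 : ℝ) T))
    (hωpos : ∀ t ∈ Set.Icc (0 : ℝ) T, 0 ≤ ω t)
    (hωint : (∫ t in (0 : ℝ)..T, ω t) = 1)
    (ϱ : ℝ) (hϱ : ϱ = ∫ t in (0 : ℝ)..T, ω t * Real.exp (-δ * t))
    (φ φhat ψ : V) (w : ℝ → V)
    (hwdiff : ∀ t ∈ Set.Icc (0 : ℝ) T, DifferentiableAt ℝ w t)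
    (hwc : ContinuousOn (deriv w) (Set.Icc (0 : ℝ) T))
    (hweq : ∀ t ∈ Set.Icc (0 : ℝ) T, deriv w t + A (w t) = φ)
    (hw0 : w 0 = φhat)
    (hwover : (∫ t in (0 : ℝ)..T, ω t • w t) = ψ)
    (φs : ℕ → V) (ws : ℕ → ℝ → V)
    (hsdiff : ∀ k : ℕ, ∀ t ∈ Set.Icc (0 : ℝ) T, DifferentiableAt ℝ (ws k) t)
    (hsc : ∀ k : ℕ, ContinuousOn (deriv (ws k)) (Set.Icc (0 : ℝ) T))
    (hseq : ∀ k : ℕ, ∀ t ∈ Set.Icc (0 : ℝ) T, deriv (ws k) t + A (ws k t) = φs k)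
    (hs0 : ∀ k : ℕ, ws k 0 = φhat)
    (hiter : ∀ k : ℕ, φs (k + 1) = (∫ t in (0 : ℝ)..T, ω t • deriv (ws k) t) + A ψ) :
    ∀ k : ℕ, ‖φs (k + 1) - φ‖ ≤ ϱ * ‖φs k - φ‖ :=
  stmt_10_general A δ hcoer T hT ω hωc hωpos hωint ϱ hϱ φ φhat ψ w hwdiff hweq hw0 hwover φs ws
    hsdiff hseq hs0 hiter
end

section
/- Let β : ℝ → ℝ be differentiable on [0,T] with β'(t) ≥ 0 for all t ∈ [0,T], β(0) ≥ 0 and β(T) = 1. Let η ∈ V and let v : ℝ → V be differentiable on [0,T] with v'(t) + A v(t) = β'(t) · η for t ∈ [0,T] and v(0) = β(0) · η. Then ‖v(T)‖ ≤ (1 − β(0) · (1 − exp(−δ T))) · ‖η‖. -/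
open RealInnerProductSpace Set

/-!
Variation of constants. Coercivity makes `S s = exp (s • -A)` decay like `exp (-δ s)`, and
`g t = S (T - t) (v t)` satisfies `g' t = β' t • S (T - t) η`. Since `β' ≥ 0` and `S` is a
contraction, `‖g T - g 0‖ ≤ (β T - β 0) ‖η‖ = (1 - β 0) ‖η‖`, while `g T = v T` and
`‖g 0‖ = β 0 ‖S T η‖ ≤ β 0 exp (-δ T) ‖η‖`.
-/

theorem norm_sub_le_sub_of_norm_deriv_le_deriv {E : Type*} [NormedAddCommGroup E]
    [NormedSpace ℝ E] {f f' : ℝ → E} {B B' : ℝ → ℝ} {a b : ℝ} (hab : a ≤ b)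
    (hf : ∀ t ∈ Icc a b, HasDerivAt f (f' t) t) (hB : ∀ t ∈ Icc a b, HasDerivAt B (B' t) t)
    (bound : ∀ t ∈ Ico a b, ‖f' t‖ ≤ B' t) :
    ‖f b - f a‖ ≤ B b - B a :=
  image_norm_le_of_norm_deriv_right_le_deriv_boundary' (f := fun t => f t - f a)
    (B := fun t => B t - B a)
    (fun t ht => ((hf t ht).sub_const _).continuousAt.continuousWithinAt)
    (fun t ht => ((hf t (Ico_subset_Icc_self ht)).sub_const _).hasDerivWithinAt)
    (by simp)
    (fun t ht => ((hB t ht).sub_const _).continuousAt.continuousWithinAt)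
    (fun t ht => ((hB t (Ico_subset_Icc_self ht)).sub_const _).hasDerivWithinAt)
    bound (right_mem_Icc.mpr hab)

theorem hasDerivAt_exp_smul_sub_apply {E : Type*} [NormedAddCommGroup E] [NormedSpace ℝ E]
    [CompleteSpace E] (B : E →L[ℝ] E) (T : ℝ) {v : ℝ → E} {v' : E} {t : ℝ}
    (hv : HasDerivAt v v' t) :
    HasDerivAt (fun t => NormedSpace.exp ((T - t) • B) (v t))
      (NormedSpace.exp ((T - t) • B) (v' - B (v t))) t := by
  have hexp : HasDerivAt (fun t : ℝ => NormedSpace.exp ((T - t) • B))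
      ((0 - 1 : ℝ) • (NormedSpace.exp ((T - t) • B) * B)) t :=
    (hasDerivAt_exp_smul_const B (T - t)).scomp t ((hasDerivAt_const t T).sub (hasDerivAt_id t))
  convert hexp.clm_apply hv using 1
  simp only [map_sub, smul_apply, mul_apply_eq_comp]
  module

section Coercive

variable {V : Type*} [NormedAddCommGroup V] [InnerProductSpace ℝ V] {A : V →L[ℝ] V} {δ : ℝ}

theorem antitone_exp_mul_norm_sq_of_hasDerivAt_neg (hcoer : ∀ v : V, δ * ‖v‖ ^ 2 ≤ ⟪A v, v⟫)
    {p : ℝ → V} (hp : ∀ u, HasDerivAt p (-A (p u)) u) :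
    Antitone fun u => Real.exp (2 * δ * u) * ‖p u‖ ^ 2 := by
  have hderiv : ∀ u, HasDerivAt (fun u => Real.exp (2 * δ * u) * ‖p u‖ ^ 2)
      (2 * Real.exp (2 * δ * u) * (δ * ‖p u‖ ^ 2 - ⟪A (p u), p u⟫)) u := fun u => by
    have hexp : HasDerivAt (fun u => Real.exp (2 * δ * u)) (Real.exp (2 * δ * u) * (2 * δ)) u := by
      simpa using ((hasDerivAt_id u).const_mul (2 * δ)).exp
    refine (hexp.mul (hp u).norm_sq).congr_deriv ?_
    rw [inner_neg_right, real_inner_comm]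
    ring
  refine antitone_of_deriv_nonpos (fun u => (hderiv u).differentiableAt) fun u => ?_
  rw [(hderiv u).deriv]
  exact mul_nonpos_of_nonneg_of_nonpos (by positivity) (sub_nonpos.mpr (hcoer (p u)))

variable [CompleteSpace V]

theorem norm_exp_smul_neg_apply_le (hcoer : ∀ v : V, δ * ‖v‖ ^ 2 ≤ ⟪A v, v⟫) (x : V) {s : ℝ}
    (hs : 0 ≤ s) : ‖NormedSpace.exp (s • -A) x‖ ≤ Real.exp (-(δ * s)) * ‖x‖ := by
  set p : ℝ → V := fun u => NormedSpace.exp (u • -A) x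
  have hp : ∀ u, HasDerivAt p (-A (p u)) u := fun u => by
    simpa [p] using (hasDerivAt_exp_smul_const' (-A) u).clm_apply (hasDerivAt_const u x)
  have hweighted : Real.exp (2 * δ * s) * ‖p s‖ ^ 2 ≤ ‖x‖ ^ 2 := by
    simpa [p] using antitone_exp_mul_norm_sq_of_hasDerivAt_neg hcoer hp hs
  have hsq : ‖p s‖ ^ 2 ≤ (Real.exp (-(δ * s)) * ‖x‖) ^ 2 := by
    have hsplit : Real.exp (2 * δ * s) = Real.exp (δ * s) ^ 2 := by
      rw [← Real.exp_nat_mul]; ring_nf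
    rw [mul_pow, Real.exp_neg, inv_pow, ← hsplit, inv_mul_eq_div,
      le_div_iff₀ (Real.exp_pos _), mul_comm]
    exact hweighted
  exact (pow_le_pow_iff_left₀ (norm_nonneg _) (by positivity) two_ne_zero).mp hsq

theorem norm_exp_smul_neg_apply_le_norm (hδ : 0 ≤ δ) (hcoer : ∀ v : V, δ * ‖v‖ ^ 2 ≤ ⟪A v, v⟫)
    (x : V) {s : ℝ} (hs : 0 ≤ s) : ‖NormedSpace.exp (s • -A) x‖ ≤ ‖x‖ :=
  (norm_exp_smul_neg_apply_le hcoer x hs).trans <|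
    mul_le_of_le_one_left (norm_nonneg x) (Real.exp_le_one_iff.mpr (by nlinarith))

end Coercive

theorem stmt_13_general {V : Type*} [NormedAddCommGroup V] [InnerProductSpace ℝ V]
    [FiniteDimensional ℝ V]
    (A : V →L[ℝ] V)
    (δ : ℝ) (hδ : 0 < δ) (hcoer : ∀ v : V, δ * ‖v‖ ^ 2 ≤ ⟪A v, v⟫)
    (T : ℝ) (hT : 0 < T)
    (β : ℝ → ℝ)
    (hβdiff : ∀ t ∈ Set.Icc (0 : ℝ) T, DifferentiableAt ℝ β t)
    (hβ' : ∀ t ∈ Set.Icc (0 : ℝ) T, 0 ≤ deriv β t)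
    (hβ0 : 0 ≤ β 0) (hβT : β T = 1)
    (η : V) (v : ℝ → V)
    (hvdiff : ∀ t ∈ Set.Icc (0 : ℝ) T, DifferentiableAt ℝ v t)
    (hveq : ∀ t ∈ Set.Icc (0 : ℝ) T, deriv v t + A (v t) = deriv β t • η)
    (hv0 : v 0 = β 0 • η) :
    ‖v T‖ ≤ (1 - β 0 * (1 - Real.exp (-δ * T))) * ‖η‖ := by
  have : CompleteSpace V := FiniteDimensional.complete ℝ V
  set S : ℝ → V →L[ℝ] V := fun s => NormedSpace.exp (s • -A)
  set g : ℝ → V := fun t => S (T - t) (v t)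
  have hg : ∀ t ∈ Icc 0 T, HasDerivAt g (deriv β t • S (T - t) η) t := fun t ht => by
    simpa [g, S, add_comm, hveq t ht] using
      hasDerivAt_exp_smul_sub_apply (-A) T (hvdiff t ht).hasDerivAt
  have hincrement : ‖g T - g 0‖ ≤ β T * ‖η‖ - β 0 * ‖η‖ :=
    norm_sub_le_sub_of_norm_deriv_le_deriv hT.le hg
      (fun t ht => (hβdiff t ht).hasDerivAt.mul_const ‖η‖) fun t ht => by
        rw [norm_smul, Real.norm_of_nonneg (hβ' t (Ico_subset_Icc_self ht))]
        exact mul_le_mul_of_nonneg_left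
          (norm_exp_smul_neg_apply_le_norm hδ.le hcoer η (sub_nonneg.mpr ht.2.le))
          (hβ' t (Ico_subset_Icc_self ht))
  have hgT : g T = v T := by simp [g, S]
  have hg0 : ‖g 0‖ ≤ β 0 * (Real.exp (-δ * T) * ‖η‖) := by
    rw [show g 0 = β 0 • S T η by simp [g, hv0], norm_smul, Real.norm_of_nonneg hβ0, neg_mul]
    exact mul_le_mul_of_nonneg_left (norm_exp_smul_neg_apply_le hcoer η hT.le) hβ0
  calc ‖v T‖ ≤ ‖g T - g 0‖ + ‖g 0‖ := hgT ▸ norm_le_norm_sub_add (g T) (g 0)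
    _ ≤ (1 - β 0 * (1 - Real.exp (-δ * T))) * ‖η‖ := by rw [hβT] at hincrement; linarith

/-- Key a priori estimate behind Theorem 4: if `v' + A v = β'(t) η` on `[0,T]` with
`v(0) = β(0) η` for a nondecreasing `β` with `β(0) ≥ 0`, `β(T) = 1`, then
`‖v(T)‖ ≤ (1 - β(0)(1 - exp(-δ T))) ‖η‖`. -/
theorem stmt_13 {V : Type*} [NormedAddCommGroup V] [InnerProductSpace ℝ V]
    [FiniteDimensional ℝ V]
    (A : V →L[ℝ] V) (hA : ∀ x y : V, ⟪A x, y⟫ = ⟪x, A y⟫)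
    (δ : ℝ) (hδ : 0 < δ) (hcoer : ∀ v : V, δ * ‖v‖ ^ 2 ≤ ⟪A v, v⟫)
    (T : ℝ) (hT : 0 < T)
    (β : ℝ → ℝ)
    (hβdiff : ∀ t ∈ Set.Icc (0 : ℝ) T, DifferentiableAt ℝ β t)
    (hβ' : ∀ t ∈ Set.Icc (0 : ℝ) T, 0 ≤ deriv β t)
    (hβ0 : 0 ≤ β 0) (hβT : β T = 1)
    (η : V) (v : ℝ → V)
    (hvdiff : ∀ t ∈ Set.Icc (0 : ℝ) T, DifferentiableAt ℝ v t)
    (hveq : ∀ t ∈ Set.Icc (0 : ℝ) T, deriv v t + A (v t) = deriv β t • η)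
    (hv0 : v 0 = β 0 • η) :
    ‖v T‖ ≤ (1 - β 0 * (1 - Real.exp (-δ * T))) * ‖η‖ :=
  stmt_13_general A δ hδ hcoer T hT β hβdiff hβ' hβ0 hβT η v hvdiff hveq hv0
end

section
/- (Theorem 4.) Let β : ℝ → ℝ be differentiable on [0,T] with β(t) > 0 and β'(t) ≥ 0 for all t ∈ [0,T], and β(T) = 1; set ϱ = 1 − β(0) · (1 − exp(−δ T)), so ϱ < 1. Let φ, φ̂, ψ ∈ V and let w : ℝ → V be differentiable on [0,T] with differentiable derivative, w'(t) + A w(t) = β(t) · φ for t ∈ [0,T], w(0) = φ̂ and w(T) = ψ. Let (φ^k)_{k∈ℕ} in V and functions w^k : ℝ → V be such that for every k: w^k is differentiable on [0,T] with differentiable derivative, (w^k)'(t) + A w^k(t) = β(t) · φ^k for t ∈ [0,T], w^k(0) = φ̂, and φ^{k+1} = (w^k)'(T) + A ψ. Then for every k ∈ ℕ, ‖φ^{k+1} − φ‖ ≤ ϱ · ‖φ^k − φ‖. -/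
/-!
The error `e = w^k - w` solves `e' + A e = β (φ^k - φ)` with `e 0 = 0`, and `φ^{k+1} - φ = e' T`.
Its derivative `g = β (φ^k - φ) - A e` solves `g' + A g = β' (φ^k - φ)`, so coercivity gives
`d/dt ‖g‖ ≤ β' ‖φ^k - φ‖ - δ ‖g‖`. Comparing `‖g‖` with the supersolution
`(β 0 * exp (-δ t) + β t - β 0) * ‖φ^k - φ‖`, which equals `‖g 0‖` at `t = 0`, bounds `‖g T‖` by
`ϱ ‖φ^k - φ‖`. The comparison is run on `‖g‖ ^ 2`, which stays differentiable where `g` vanishes.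
-/

open RealInnerProductSpace Set

section

variable {E : Type*} [NormedAddCommGroup E] [InnerProductSpace ℝ E]

theorem norm_le_of_inner_deriv_lt_deriv_boundary {g g' : ℝ → E} {B B' : ℝ → ℝ} {a b : ℝ}
    (hg : ∀ t ∈ Icc a b, HasDerivAt g (g' t) t) (hB : ∀ t ∈ Icc a b, HasDerivAt B (B' t) t)
    (hB_nonneg : ∀ t ∈ Icc a b, 0 ≤ B t) (ha : ‖g a‖ ≤ B a)
    (bound : ∀ t ∈ Ico a b, ‖g t‖ = B t → ⟪g' t, g t⟫ < B' t * B t) :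
    ∀ t ∈ Icc a b, ‖g t‖ ≤ B t := by
  have hg_sq (t) (ht : t ∈ Icc a b) : HasDerivAt (‖g ·‖ ^ 2) (2 * ⟪g' t, g t⟫) t := by
    simpa only [real_inner_comm] using (hg t ht).norm_sq
  have hB_sq (t) (ht : t ∈ Icc a b) : HasDerivAt (B · ^ 2) (2 * (B' t * B t)) t :=
    ((hB t ht).pow 2).congr_deriv (by norm_num; ring)
  have hsq : ∀ t ∈ Icc a b, ‖g t‖ ^ 2 ≤ B t ^ 2 := by
    refine image_le_of_deriv_right_lt_deriv_boundary'
      (fun t ht => (hg_sq t ht).continuousAt.continuousWithinAt)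
      (fun t ht => (hg_sq t (Ico_subset_Icc_self ht)).hasDerivWithinAt)
      (pow_le_pow_left₀ (norm_nonneg _) ha 2)
      (fun t ht => (hB_sq t ht).continuousAt.continuousWithinAt)
      (fun t ht => (hB_sq t (Ico_subset_Icc_self ht)).hasDerivWithinAt) ?_
    intro t ht hcontact
    have hB_t := hB_nonneg t (Ico_subset_Icc_self ht)
    linarith [bound t ht ((sq_eq_sq₀ (norm_nonneg _) hB_t).1 hcontact)]
  exact fun t ht => (sq_le_sq₀ (norm_nonneg _) (hB_nonneg t ht)).1 (hsq t ht)

theorem norm_le_of_inner_deriv_le_of_supersolution {g g' : ℝ → E} {G G' c : ℝ → ℝ} {δ a b : ℝ}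
    (hδ : 0 < δ) (hg : ∀ t ∈ Icc a b, HasDerivAt g (g' t) t)
    (hG : ∀ t ∈ Icc a b, HasDerivAt G (G' t) t) (hG_nonneg : ∀ t ∈ Icc a b, 0 ≤ G t)
    (hg' : ∀ t ∈ Icc a b, ⟪g' t, g t⟫ ≤ c t * ‖g t‖ - δ * ‖g t‖ ^ 2)
    (hG' : ∀ t ∈ Icc a b, c t - δ * G t ≤ G' t) (ha : ‖g a‖ ≤ G a) :
    ∀ t ∈ Icc a b, ‖g t‖ ≤ G t := by
  intro t ht
  refine le_of_forall_pos_le_add fun ε hε => ?_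
  refine norm_le_of_inner_deriv_lt_deriv_boundary hg (fun s hs => (hG s hs).add_const ε)
    (fun s hs => by linarith [hG_nonneg s hs]) (by linarith) ?_ t ht
  intro s hs hcontact
  have hs' := Ico_subset_Icc_self hs
  have hr : 0 < ‖g s‖ := by linarith [hG_nonneg s hs']
  -- at a contact point `‖g s‖ = G s + ε` the gap `δ ‖g s‖ ε` makes the inequality strict
  calc ⟪g' s, g s⟫ ≤ c s * ‖g s‖ - δ * ‖g s‖ ^ 2 := hg' s hs'
    _ < (c s - δ * G s) * ‖g s‖ := by rw [hcontact] at hr ⊢; nlinarith [mul_pos hδ hr]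
    _ ≤ G' s * (G s + ε) := by rw [← hcontact]; exact mul_le_mul_of_nonneg_right (hG' s hs') hr.le

theorem inner_smul_sub_apply_le {A : E → E} {δ : ℝ} (hcoer : ∀ v : E, δ * ‖v‖ ^ 2 ≤ ⟪A v, v⟫)
    {b : ℝ} (hb : 0 ≤ b) (η x : E) : ⟪b • η - A x, x⟫ ≤ b * ‖η‖ * ‖x‖ - δ * ‖x‖ ^ 2 := by
  rw [inner_sub_left, real_inner_smul_left, mul_assoc]
  linarith [mul_le_mul_of_nonneg_left (real_inner_le_norm η x) hb, hcoer x]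

theorem hasDerivAt_sub_of_deriv_add_apply_eq {A : E →L[ℝ] E} {u₁ u₂ : ℝ → E} {θ₁ θ₂ : E}
    {b t : ℝ} (h₁ : DifferentiableAt ℝ u₁ t) (h₂ : DifferentiableAt ℝ u₂ t)
    (e₁ : deriv u₁ t + A (u₁ t) = b • θ₁) (e₂ : deriv u₂ t + A (u₂ t) = b • θ₂) :
    HasDerivAt (u₁ - u₂) (b • (θ₁ - θ₂) - A ((u₁ - u₂) t)) t := by
  convert h₁.hasDerivAt.sub h₂.hasDerivAt using 1
  rw [eq_sub_of_add_eq e₁, eq_sub_of_add_eq e₂, Pi.sub_apply, map_sub, smul_sub]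
  abel

theorem norm_smul_sub_apply_le_of_hasDerivAt {A : E →L[ℝ] E} {δ : ℝ} (hδ : 0 < δ)
    (hcoer : ∀ v : E, δ * ‖v‖ ^ 2 ≤ ⟪A v, v⟫) {T : ℝ} (hT : 0 ≤ T) {β : ℝ → ℝ}
    (hβdiff : ∀ t ∈ Icc 0 T, DifferentiableAt ℝ β t) (hβ' : ∀ t ∈ Icc 0 T, 0 ≤ deriv β t)
    (hβ0 : 0 ≤ β 0) {η : E} {v : ℝ → E}
    (hv : ∀ t ∈ Icc 0 T, HasDerivAt v (β t • η - A (v t)) t) (hv0 : v 0 = 0) :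
    ‖β T • η - A (v T)‖ ≤ (β 0 * Real.exp (-δ * T) + (β T - β 0)) * ‖η‖ := by
  have hβmono : ∀ t ∈ Icc 0 T, β 0 ≤ β t := by
    have : MonotoneOn β (Icc 0 T) := monotoneOn_of_deriv_nonneg (convex_Icc 0 T)
      (fun t ht => (hβdiff t ht).continuousAt.continuousWithinAt)
      (fun t ht => (hβdiff t (interior_subset ht)).differentiableWithinAt)
      (fun t ht => hβ' t (interior_subset ht))
    exact fun t ht => this ⟨le_rfl, hT⟩ ht ht.1
  have hg (t) (ht : t ∈ Icc 0 T) : HasDerivAt (fun s => β s • η - A (v s))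
      (deriv β t • η - A (β t • η - A (v t))) t :=
    ((hβdiff t ht).hasDerivAt.smul_const η).sub (A.hasFDerivAt.comp_hasDerivAt t (hv t ht))
  have hexp (t : ℝ) : HasDerivAt (fun s => Real.exp (-δ * s)) (Real.exp (-δ * t) * -δ) t := by
    simpa using ((hasDerivAt_id t).const_mul (-δ)).exp
  have hG (t) (ht : t ∈ Icc 0 T) :
      HasDerivAt (fun s => (β 0 * Real.exp (-δ * s) + (β s - β 0)) * ‖η‖)
        ((β 0 * (Real.exp (-δ * t) * -δ) + deriv β t) * ‖η‖) t :=
    (((hexp t).const_mul (β 0)).add ((hβdiff t ht).hasDerivAt.sub_const (β 0))).mul_const ‖η‖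
  refine norm_le_of_inner_deriv_le_of_supersolution (c := fun t => deriv β t * ‖η‖) hδ hg hG
    (fun t ht => ?_) (fun t ht => ?_) (fun t ht => ?_) ?_ T ⟨hT, le_rfl⟩
  · exact mul_nonneg (add_nonneg (by positivity) (sub_nonneg.2 (hβmono t ht))) (norm_nonneg η)
  · exact inner_smul_sub_apply_le hcoer (hβ' t ht) η _
  · have := mul_nonneg (mul_nonneg hδ.le (sub_nonneg.2 (hβmono t ht))) (norm_nonneg η)
    linarith
  · simp [hv0, norm_smul, abs_of_nonneg hβ0]

end

theorem stmt_14_general {V : Type*} [NormedAddCommGroup V] [InnerProductSpace ℝ V]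
    (A : V →L[ℝ] V)
    (δ : ℝ) (hδ : 0 < δ) (hcoer : ∀ v : V, δ * ‖v‖ ^ 2 ≤ ⟪A v, v⟫)
    (T : ℝ) (hT : 0 < T)
    (β : ℝ → ℝ)
    (hβdiff : ∀ t ∈ Set.Icc (0 : ℝ) T, DifferentiableAt ℝ β t)
    (hβpos : ∀ t ∈ Set.Icc (0 : ℝ) T, 0 < β t)
    (hβ' : ∀ t ∈ Set.Icc (0 : ℝ) T, 0 ≤ deriv β t)
    (hβT : β T = 1)
    (ϱ : ℝ) (hϱ : ϱ = 1 - β 0 * (1 - Real.exp (-δ * T)))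
    (φ φhat ψ : V) (w : ℝ → V)
    (hwdiff : ∀ t ∈ Set.Icc (0 : ℝ) T, DifferentiableAt ℝ w t)
    (hweq : ∀ t ∈ Set.Icc (0 : ℝ) T, deriv w t + A (w t) = β t • φ)
    (hw0 : w 0 = φhat) (hwT : w T = ψ)
    (φs : ℕ → V) (ws : ℕ → ℝ → V)
    (hsdiff : ∀ k : ℕ, ∀ t ∈ Set.Icc (0 : ℝ) T, DifferentiableAt ℝ (ws k) t)
    (hseq : ∀ k : ℕ, ∀ t ∈ Set.Icc (0 : ℝ) T, deriv (ws k) t + A (ws k t) = β t • φs k)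
    (hs0 : ∀ k : ℕ, ws k 0 = φhat)
    (hiter : ∀ k : ℕ, φs (k + 1) = deriv (ws k) T + A ψ) :
    ϱ < 1 ∧ ∀ k : ℕ, ‖φs (k + 1) - φ‖ ≤ ϱ * ‖φs k - φ‖ := by
  have h0 : (0 : ℝ) ∈ Icc 0 T := ⟨le_rfl, hT.le⟩
  have hT' : T ∈ Icc 0 T := ⟨hT.le, le_rfl⟩
  have hβ0 := hβpos 0 h0
  refine ⟨?_, fun k => ?_⟩
  · have hexp : Real.exp (-δ * T) < 1 := Real.exp_lt_one_iff.2 (by nlinarith)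
    rw [hϱ]
    linarith [mul_pos hβ0 (sub_pos.2 hexp)]
  have hv (t) (ht : t ∈ Icc 0 T) := hasDerivAt_sub_of_deriv_add_apply_eq (hsdiff k t ht)
    (hwdiff t ht) (hseq k t ht) (hweq t ht)
  have hv0 : (ws k - w) 0 = 0 := by rw [Pi.sub_apply, hs0, hw0, sub_self]
  have hφ : φs (k + 1) - φ = β T • (φs k - φ) - A ((ws k - w) T) := by
    rw [hiter, eq_sub_of_add_eq (hseq k T hT'), Pi.sub_apply, map_sub, hwT, hβT]
    simp only [one_smul]
    abel
  calc ‖φs (k + 1) - φ‖ ≤ (β 0 * Real.exp (-δ * T) + (β T - β 0)) * ‖φs k - φ‖ := by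
        rw [hφ]
        exact norm_smul_sub_apply_le_of_hasDerivAt hδ hcoer hT.le hβdiff hβ' hβ0.le hv hv0
    _ = ϱ * ‖φs k - φ‖ := by rw [hβT, hϱ]; ring

/-- Theorem 4: iterative identification of the spatial factor `φ` of the
multiplicative right-hand side `β(t) φ` of `w' + A w = β φ` from the final
overdetermination `w(T) = ψ` contracts with factor
`ϱ = 1 - β(0)(1 - exp(-δ T)) < 1`. -/
theorem stmt_14 {V : Type*} [NormedAddCommGroup V] [InnerProductSpace ℝ V]
    [FiniteDimensional ℝ V]
    (A : V →L[ℝ] V) (hA : ∀ x y : V, ⟪A x, y⟫ = ⟪x, A y⟫)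
    (δ : ℝ) (hδ : 0 < δ) (hcoer : ∀ v : V, δ * ‖v‖ ^ 2 ≤ ⟪A v, v⟫)
    (T : ℝ) (hT : 0 < T)
    (β : ℝ → ℝ)
    (hβdiff : ∀ t ∈ Set.Icc (0 : ℝ) T, DifferentiableAt ℝ β t)
    (hβpos : ∀ t ∈ Set.Icc (0 : ℝ) T, 0 < β t)
    (hβ' : ∀ t ∈ Set.Icc (0 : ℝ) T, 0 ≤ deriv β t)
    (hβT : β T = 1)
    (ϱ : ℝ) (hϱ : ϱ = 1 - β 0 * (1 - Real.exp (-δ * T)))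
    (φ φhat ψ : V) (w : ℝ → V)
    (hwdiff : ∀ t ∈ Set.Icc (0 : ℝ) T, DifferentiableAt ℝ w t)
    (hwdiff2 : ∀ t ∈ Set.Icc (0 : ℝ) T, DifferentiableAt ℝ (deriv w) t)
    (hweq : ∀ t ∈ Set.Icc (0 : ℝ) T, deriv w t + A (w t) = β t • φ)
    (hw0 : w 0 = φhat) (hwT : w T = ψ)
    (φs : ℕ → V) (ws : ℕ → ℝ → V)
    (hsdiff : ∀ k : ℕ, ∀ t ∈ Set.Icc (0 : ℝ) T, DifferentiableAt ℝ (ws k) t)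
    (hsdiff2 : ∀ k : ℕ, ∀ t ∈ Set.Icc (0 : ℝ) T, DifferentiableAt ℝ (deriv (ws k)) t)
    (hseq : ∀ k : ℕ, ∀ t ∈ Set.Icc (0 : ℝ) T, deriv (ws k) t + A (ws k t) = β t • φs k)
    (hs0 : ∀ k : ℕ, ws k 0 = φhat)
    (hiter : ∀ k : ℕ, φs (k + 1) = deriv (ws k) T + A ψ) :
    ϱ < 1 ∧ ∀ k : ℕ, ‖φs (k + 1) - φ‖ ≤ ϱ * ‖φs k - φ‖ :=
  stmt_14_general A δ hδ hcoer T hT β hβdiff hβpos hβ' hβT ϱ hϱ φ φhat ψ w hwdiff hweq hw0 hwT φs ws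
    hsdiff hseq hs0 hiter
end

section
/- Let φ, φ̂, ψ ∈ V and let w : ℝ → V be differentiable on [0,T] with differentiable derivative, satisfying w'(t) + A w(t) = φ for all t ∈ [0,T], w(0) = φ̂ and w(T) = ψ. Then the function v = w' satisfies v'(t) + A v(t) = 0 for all t ∈ [0,T] and the nonlocal condition v(T) − v(0) = A (φ̂ − ψ). -/
open Set

theorem deriv_deriv_add_apply_deriv_eq_zero {𝕜 E : Type*} [NontriviallyNormedField 𝕜]
    [NormedAddCommGroup E] [NormedSpace 𝕜 E] {A : E →L[𝕜] E} {φ : E} {w : 𝕜 → E}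
    {s : Set 𝕜} {t : 𝕜} (hs : UniqueDiffWithinAt 𝕜 s t) (ht : t ∈ s)
    (hw : DifferentiableAt 𝕜 w t) (hw' : DifferentiableAt 𝕜 (deriv w) t)
    (heq : ∀ x ∈ s, deriv w x + A (w x) = φ) :
    deriv (deriv w) t + A (deriv w t) = 0 := by
  have hcongr : EqOn (deriv w) (fun x ↦ φ - A (w x)) s := fun x hx ↦
    eq_sub_of_add_eq (heq x hx)
  have hrhs : HasDerivWithinAt (fun x ↦ φ - A (w x)) (0 - A (deriv w t)) s t :=
    (hasDerivWithinAt_const t s φ).sub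
      (A.hasFDerivAt.comp_hasDerivWithinAt t hw.hasDerivAt.hasDerivWithinAt)
  -- The equation only holds on `s`, so it is differentiated within `s`; uniqueness of
  -- derivatives within `s` identifies the result with the two-sided `deriv`.
  have hderiv : deriv (deriv w) t = -A (deriv w t) := by
    simpa using hs.eq_deriv s hw'.hasDerivAt.hasDerivWithinAt (hrhs.congr hcongr (hcongr ht))
  rw [hderiv, neg_add_cancel]

theorem sub_eq_map_sub_of_add_map_eq {R M N : Type*} [Semiring R] [AddCommGroup M]
    [AddCommGroup N] [Module R M] [Module R N] (A : M →ₗ[R] N) {x y : N} {p q : M} {φ : N}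
    (hp : x + A p = φ) (hq : y + A q = φ) :
    y - x = A (p - q) := by
  rw [eq_sub_of_add_eq hp, eq_sub_of_add_eq hq, map_sub]
  abel

theorem stmt_15_general {V : Type*} [NormedAddCommGroup V] [InnerProductSpace ℝ V]
    (A : V →L[ℝ] V)
    (T : ℝ) (hT : 0 < T)
    (φ φhat ψ : V) (w : ℝ → V)
    (hwdiff : ∀ t ∈ Set.Icc (0 : ℝ) T, DifferentiableAt ℝ w t)
    (hwdiff2 : ∀ t ∈ Set.Icc (0 : ℝ) T, DifferentiableAt ℝ (deriv w) t)
    (hweq : ∀ t ∈ Set.Icc (0 : ℝ) T, deriv w t + A (w t) = φ)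
    (hw0 : w 0 = φhat) (hwT : w T = ψ) :
    (∀ t ∈ Set.Icc (0 : ℝ) T, deriv (deriv w) t + A (deriv w t) = 0) ∧
      deriv w T - deriv w 0 = A (φhat - ψ) := by
  refine ⟨fun t ht ↦ deriv_deriv_add_apply_deriv_eq_zero (uniqueDiffOn_Icc hT t ht) ht
    (hwdiff t ht) (hwdiff2 t ht) hweq, ?_⟩
  rw [← hw0, ← hwT]
  exact sub_eq_map_sub_of_add_map_eq (A : V →ₗ[ℝ] V)
    (hweq 0 (left_mem_Icc.2 hT.le)) (hweq T (right_mem_Icc.2 hT.le))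

/-- Reduction of the inverse source problem with final overdetermination to a
nonlocal problem for the time derivative `v = w'`: `v' + A v = 0` on `[0,T]` and
`v(T) - v(0) = A (φ̂ - ψ)`. -/
theorem stmt_15 {V : Type*} [NormedAddCommGroup V] [InnerProductSpace ℝ V]
    [FiniteDimensional ℝ V]
    (A : V →L[ℝ] V)
    (T : ℝ) (hT : 0 < T)
    (φ φhat ψ : V) (w : ℝ → V)
    (hwdiff : ∀ t ∈ Set.Icc (0 : ℝ) T, DifferentiableAt ℝ w t)
    (hwdiff2 : ∀ t ∈ Set.Icc (0 : ℝ) T, DifferentiableAt ℝ (deriv w) t)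
    (hweq : ∀ t ∈ Set.Icc (0 : ℝ) T, deriv w t + A (w t) = φ)
    (hw0 : w 0 = φhat) (hwT : w T = ψ) :
    (∀ t ∈ Set.Icc (0 : ℝ) T, deriv (deriv w) t + A (deriv w t) = 0) ∧
      deriv w T - deriv w 0 = A (φhat - ψ) :=
  stmt_15_general A T hT φ φhat ψ w hwdiff hwdiff2 hweq hw0 hwT
end
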